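/- arXiv:1010.4902 — 10 statements merged into one kernel-verified Lean document; each statement's English description precedes it below -/
import Mathlib

section
/- Let $-\infty\le a<b\le\infty$, let $q:(a,b)\to\mathbb{R}$, $\lambda\in\mathbb{R}$ and $z\in\mathbb{C}$. Suppose $\phi:(a,b)\to\mathbb{R}$ is twice differentiable with $\phi(x)>0$ and $-\phi''(x)+q(x)\phi(x)=\lambda\,\phi(x)$ for all $x\in(a,b)$, and $u:(a,b)\to\mathbb{C}$ is twice differentiable with $-u''(x)+q(x)u(x)=z\,u(x)$ for all $x\in(a,b)$. Then the function $\hat u(x) = -u'(x) + \tfrac{\phi'(x)}{\phi(x)}u(x) = -\tfrac{W_x(\phi,u)}{\phi(x)}$ is twice differentiable on $(a,b)$ and satisfies $-\hat u''(x) + \hat q(x)\hat u(x) = z\,\hat u(x)$ for all $x\in(a,b)$, where $\hat q(x) = q(x) - 2\,\tfrac{d}{dx}\tfrac{\phi'(x)}{\phi(x)}$. -/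
open Set MeasureTheory Filter

/-! With `g = φ'/φ`, the equation for `φ` becomes the Riccati equation `g' = q - λ - g²`.
Using it together with `-u'' = (z - q) u`, the transform `û = -u' + g u` satisfies the first
order equation `û' = (z - λ) u - g û`. Differentiating once more and eliminating `u'` through
`û = -u' + g u` gives `-û'' + (q - 2 g') û = z û`, since `q - g' - g² = λ`. -/

theorem isOpen_setOf_ereal_lt_and_lt (a b : EReal) :
    IsOpen {x : ℝ | a < (x : EReal) ∧ (x : EReal) < b} :=
  isOpen_Ioo.preimage continuous_coe_real_ereal

theorem hasDerivAt_logDeriv_of_schrodinger {q phi : ℝ → ℝ} {lam x : ℝ}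
    (hphi_d1 : DifferentiableAt ℝ phi x) (hphi_d2 : DifferentiableAt ℝ (deriv phi) x)
    (hphi_ne : phi x ≠ 0) (hphi_eq : -deriv (deriv phi) x + q x * phi x = lam * phi x) :
    HasDerivAt (logDeriv phi) (q x - lam - logDeriv phi x ^ 2) x := by
  have hphi'' : deriv (deriv phi) x = (q x - lam) * phi x := by linear_combination -hphi_eq
  refine (hphi_d2.hasDerivAt.div hphi_d1.hasDerivAt hphi_ne).congr_deriv ?_
  rw [hphi'', logDeriv_apply]
  field_simp

noncomputable def darboux (g : ℝ → ℝ) (u : ℝ → ℂ) : ℝ → ℂ :=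
  fun x => -deriv u x + (g x : ℂ) * u x

theorem darboux_logDeriv_apply {phi : ℝ → ℝ} {x : ℝ} (u : ℝ → ℂ) (hphi_ne : phi x ≠ 0) :
    darboux (logDeriv phi) u x
      = -(((phi x : ℂ) * deriv u x - ((deriv phi x : ℝ) : ℂ) * u x) / (phi x : ℂ)) := by
  have hphi_ne' : (phi x : ℂ) ≠ 0 := by exact_mod_cast hphi_ne
  simp only [darboux, logDeriv_apply, Complex.ofReal_div]
  field_simp
  ring

section Darboux

variable {q g : ℝ → ℝ} {lam : ℝ} {z : ℂ} {u : ℝ → ℂ} {x : ℝ}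

theorem hasDerivAt_darboux (hg : HasDerivAt g (q x - lam - g x ^ 2) x)
    (hu_d1 : DifferentiableAt ℝ u x) (hu_d2 : DifferentiableAt ℝ (deriv u) x)
    (hu_eq : -deriv (deriv u) x + (q x : ℂ) * u x = z * u x) :
    HasDerivAt (darboux g u) ((z - lam) * u x - g x * darboux g u x) x := by
  have hu'' : deriv (deriv u) x = (q x - z) * u x := by linear_combination -hu_eq
  refine (hu_d2.hasDerivAt.neg.add (hg.ofReal_comp.mul hu_d1.hasDerivAt)).congr_deriv ?_
  rw [hu'', darboux]
  push_cast
  ring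

variable {s : Set ℝ}

theorem hasDerivAt_deriv_darboux (hs : IsOpen s) (hx : x ∈ s)
    (hg : ∀ y ∈ s, HasDerivAt g (q y - lam - g y ^ 2) y)
    (hu_d1 : ∀ y ∈ s, DifferentiableAt ℝ u y)
    (hu_d2 : ∀ y ∈ s, DifferentiableAt ℝ (deriv u) y)
    (hu_eq : ∀ y ∈ s, -deriv (deriv u) y + (q y : ℂ) * u y = z * u y) :
    HasDerivAt (deriv (darboux g u))
      ((z - lam) * deriv u x - ((q x - lam - g x ^ 2 : ℝ) * darboux g u x
        + g x * ((z - lam) * u x - g x * darboux g u x))) x := by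
  have hderiv : deriv (darboux g u) =ᶠ[nhds x]
      fun y => (z - lam) * u y - g y * darboux g u y :=
    eventually_of_mem (hs.mem_nhds hx) fun y hy =>
      (hasDerivAt_darboux (hg y hy) (hu_d1 y hy) (hu_d2 y hy) (hu_eq y hy)).deriv
  refine HasDerivAt.congr_of_eventuallyEq ?_ hderiv
  exact ((hu_d1 x hx).hasDerivAt.const_mul (z - lam)).sub ((hg x hx).ofReal_comp.mul
    (hasDerivAt_darboux (hg x hx) (hu_d1 x hx) (hu_d2 x hx) (hu_eq x hx)))

theorem darboux_schrodinger (hs : IsOpen s) (hx : x ∈ s)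
    (hg : ∀ y ∈ s, HasDerivAt g (q y - lam - g y ^ 2) y)
    (hu_d1 : ∀ y ∈ s, DifferentiableAt ℝ u y)
    (hu_d2 : ∀ y ∈ s, DifferentiableAt ℝ (deriv u) y)
    (hu_eq : ∀ y ∈ s, -deriv (deriv u) y + (q y : ℂ) * u y = z * u y) :
    -deriv (deriv (darboux g u)) x + ((q x - 2 * deriv g x : ℝ) : ℂ) * darboux g u x
      = z * darboux g u x := by
  rw [(hasDerivAt_deriv_darboux hs hx hg hu_d1 hu_d2 hu_eq).deriv, (hg x hx).deriv, darboux]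
  push_cast
  ring

end Darboux

theorem stmt_0_general (a b : EReal)
    (q phi : ℝ → ℝ) (lam : ℝ) (z : ℂ) (u : ℝ → ℂ)
    (E : Set ℝ) (hE : E = {x : ℝ | a < (x : EReal) ∧ (x : EReal) < b})
    (hphi_d1 : ∀ x ∈ E, DifferentiableAt ℝ phi x)
    (hphi_d2 : ∀ x ∈ E, DifferentiableAt ℝ (deriv phi) x)
    (hphi_pos : ∀ x ∈ E, 0 < phi x)
    (hphi_eq : ∀ x ∈ E, -deriv (deriv phi) x + q x * phi x = lam * phi x)
    (hu_d1 : ∀ x ∈ E, DifferentiableAt ℝ u x)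
    (hu_d2 : ∀ x ∈ E, DifferentiableAt ℝ (deriv u) x)
    (hu_eq : ∀ x ∈ E, -deriv (deriv u) x + (q x : ℂ) * u x = z * u x)
    (uhat : ℝ → ℂ)
    (huhat : uhat = fun x => -deriv u x + ((deriv phi x / phi x : ℝ) : ℂ) * u x)
    (qhat : ℝ → ℝ)
    (hqhat : qhat = fun x => q x - 2 * deriv (fun y => deriv phi y / phi y) x) :
    ∀ x ∈ E,
      uhat x = -(((Complex.ofReal (phi x)) * deriv u x - (Complex.ofReal (deriv phi x)) * u x) / (Complex.ofReal (phi x))) ∧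
      DifferentiableAt ℝ uhat x ∧ DifferentiableAt ℝ (deriv uhat) x ∧
      -deriv (deriv uhat) x + (qhat x : ℂ) * uhat x = z * uhat x := by
  have hE_open : IsOpen E := hE ▸ isOpen_setOf_ereal_lt_and_lt a b
  have hriccati : ∀ y ∈ E, HasDerivAt (logDeriv phi) (q y - lam - logDeriv phi y ^ 2) y :=
    fun y hy => hasDerivAt_logDeriv_of_schrodinger (hphi_d1 y hy) (hphi_d2 y hy)
      (hphi_pos y hy).ne' (hphi_eq y hy)
  have huhat' : uhat = darboux (logDeriv phi) u := huhat
  have hqhat' : qhat = fun x => q x - 2 * deriv (logDeriv phi) x := hqhat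
  subst huhat' hqhat'
  intro x hx
  exact ⟨darboux_logDeriv_apply u (hphi_pos x hx).ne',
    (hasDerivAt_darboux (hriccati x hx) (hu_d1 x hx) (hu_d2 x hx) (hu_eq x hx)).differentiableAt,
    (hasDerivAt_deriv_darboux hE_open hx hriccati hu_d1 hu_d2 hu_eq).differentiableAt,
    darboux_schrodinger hE_open hx hriccati hu_d1 hu_d2 hu_eq⟩

/-- The single commutation (Crum--Darboux) transform
`û = -u' + (φ'/φ)u = -W(φ,u)/φ` of a solution `u` of `-u'' + q u = z u`
by a positive solution `φ` of `-φ'' + q φ = λ φ` is a twice differentiable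
solution of `-û'' + q̂ û = z û` with `q̂ = q - 2 (φ'/φ)'`. -/
theorem stmt_0 (a b : EReal) (hab : a < b)
    (q phi : ℝ → ℝ) (lam : ℝ) (z : ℂ) (u : ℝ → ℂ)
    (E : Set ℝ) (hE : E = {x : ℝ | a < (x : EReal) ∧ (x : EReal) < b})
    (hphi_d1 : ∀ x ∈ E, DifferentiableAt ℝ phi x)
    (hphi_d2 : ∀ x ∈ E, DifferentiableAt ℝ (deriv phi) x)
    (hphi_pos : ∀ x ∈ E, 0 < phi x)
    (hphi_eq : ∀ x ∈ E, -deriv (deriv phi) x + q x * phi x = lam * phi x)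
    (hu_d1 : ∀ x ∈ E, DifferentiableAt ℝ u x)
    (hu_d2 : ∀ x ∈ E, DifferentiableAt ℝ (deriv u) x)
    (hu_eq : ∀ x ∈ E, -deriv (deriv u) x + (q x : ℂ) * u x = z * u x)
    (uhat : ℝ → ℂ)
    (huhat : uhat = fun x => -deriv u x + ((deriv phi x / phi x : ℝ) : ℂ) * u x)
    (qhat : ℝ → ℝ)
    (hqhat : qhat = fun x => q x - 2 * deriv (fun y => deriv phi y / phi y) x) :
    ∀ x ∈ E,
      uhat x = -(((Complex.ofReal (phi x)) * deriv u x - (Complex.ofReal (deriv phi x)) * u x) / (Complex.ofReal (phi x))) ∧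
      DifferentiableAt ℝ uhat x ∧ DifferentiableAt ℝ (deriv uhat) x ∧
      -deriv (deriv uhat) x + (qhat x : ℂ) * uhat x = z * uhat x :=
  stmt_0_general a b q phi lam z u E hE hphi_d1 hphi_d2 hphi_pos hphi_eq hu_d1 hu_d2 hu_eq uhat
    huhat qhat hqhat
end

section
/- Let $-\infty\le a<b\le\infty$, $q:(a,b)\to\mathbb{R}$, $\lambda\in\mathbb{R}$, $z\in\mathbb{C}$ with $z\ne\lambda$, and let $\phi_\lambda:(a,b)\to\mathbb{R}$ be twice differentiable with $\phi_\lambda>0$ and $-\phi_\lambda''+q\phi_\lambda=\lambda\phi_\lambda$ on $(a,b)$. Let $\theta,\phi:(a,b)\to\mathbb{C}$ be twice differentiable with $-\theta''+q\theta=z\theta$, $-\phi''+q\phi=z\phi$, and $W_x(\theta,\phi)=1$ for all $x\in(a,b)$. Define $\hat\theta(x) = -\tfrac{W_x(\phi_\lambda,\theta)}{\phi_\lambda(x)}$ and $\hat\phi(x) = -\tfrac{W_x(\phi_\lambda,\phi)}{(z-\lambda)\,\phi_\lambda(x)}$. Then $W_x(\hat\theta,\hat\phi)=1$ for all $x\in(a,b)$.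 -/
/-!
If `P` solves `-P'' + qP = λP` and `u` solves `-u'' + qu = zu`, then
`(P u' - P' u)' = P u'' - P'' u = (λ - z) P u`. Hence the commutation transform
`û = -W(P,u)/P` has derivative `(z - λ) u + W(P,u) P'/P²`, and in the Wronskian of two such
transforms the `P'/P²` terms cancel, leaving `W(û, v̂) = (z - λ) (u W(P,v) - W(P,u) v)/P
= (z - λ) W(u,v)`. Dividing `φ̂` by `z - λ` restores the normalization.
-/

section CommutationTransform

variable {𝕜 : Type*} [NontriviallyNormedField 𝕜] {𝕜' : Type*} [NontriviallyNormedField 𝕜']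
  [NormedAlgebra 𝕜 𝕜'] {P P' u u' : 𝕜 → 𝕜'} {P'' u'' q lam z : 𝕜'} {x : 𝕜}

theorem hasDerivAt_wronskian (hP : HasDerivAt P (P' x) x) (hP' : HasDerivAt P' P'' x)
    (hu : HasDerivAt u (u' x) x) (hu' : HasDerivAt u' u'' x) :
    HasDerivAt (fun y => P y * u' y - P' y * u y) (P x * u'' - P'' * u x) x :=
  ((hP.mul hu').sub (hP'.mul hu)).congr_deriv (by ring)

theorem hasDerivAt_wronskian_of_schrodinger (hP : HasDerivAt P (P' x) x)
    (hP' : HasDerivAt P' P'' x) (hu : HasDerivAt u (u' x) x) (hu' : HasDerivAt u' u'' x)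
    (hPeq : -P'' + q * P x = lam * P x) (hueq : -u'' + q * u x = z * u x) :
    HasDerivAt (fun y => P y * u' y - P' y * u y) ((lam - z) * P x * u x) x :=
  (hasDerivAt_wronskian hP hP' hu hu').congr_deriv
    (by linear_combination u x * hPeq - P x * hueq)

theorem hasDerivAt_commutationTransform (hP : HasDerivAt P (P' x) x)
    (hP' : HasDerivAt P' P'' x) (hu : HasDerivAt u (u' x) x) (hu' : HasDerivAt u' u'' x)
    (hPeq : -P'' + q * P x = lam * P x) (hueq : -u'' + q * u x = z * u x) (hP0 : P x ≠ 0) :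
    HasDerivAt (fun y => -((P y * u' y - P' y * u y) / P y))
      ((z - lam) * u x + (P x * u' x - P' x * u x) * P' x / P x ^ 2) x := by
  refine ((hasDerivAt_wronskian_of_schrodinger hP hP' hu hu' hPeq hueq).fun_div hP hP0).neg
    |>.congr_deriv ?_
  field_simp
  ring

end CommutationTransform

theorem commutationTransform_wronskian {K : Type*} [Field K] {P P' u u' v v' μ : K}
    (hP0 : P ≠ 0) :
    -((P * u' - P' * u) / P) * (μ * v + (P * v' - P' * v) * P' / P ^ 2)
      - (μ * u + (P * u' - P' * u) * P' / P ^ 2) * -((P * v' - P' * v) / P)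
      = μ * (u * v' - u' * v) := by
  field_simp
  ring

theorem stmt_3_general
    (q : ℝ → ℝ) (lam : ℝ) (z : ℂ) (hzlam : z ≠ (lam : ℂ))
    (phil : ℝ → ℝ) (theta phi : ℝ → ℂ)
    (E : Set ℝ)
    (hl_d1 : ∀ x ∈ E, DifferentiableAt ℝ phil x)
    (hl_d2 : ∀ x ∈ E, DifferentiableAt ℝ (deriv phil) x)
    (hl_pos : ∀ x ∈ E, 0 < phil x)
    (hl_eq : ∀ x ∈ E, -deriv (deriv phil) x + q x * phil x = lam * phil x)
    (hth_d1 : ∀ x ∈ E, DifferentiableAt ℝ theta x)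
    (hth_d2 : ∀ x ∈ E, DifferentiableAt ℝ (deriv theta) x)
    (hth_eq : ∀ x ∈ E, -deriv (deriv theta) x + (q x : ℂ) * theta x = z * theta x)
    (hph_d1 : ∀ x ∈ E, DifferentiableAt ℝ phi x)
    (hph_d2 : ∀ x ∈ E, DifferentiableAt ℝ (deriv phi) x)
    (hph_eq : ∀ x ∈ E, -deriv (deriv phi) x + (q x : ℂ) * phi x = z * phi x)
    (hW : ∀ x ∈ E, theta x * deriv phi x - deriv theta x * phi x = 1)
    (thetahat phihat : ℝ → ℂ)
    (hthetahat : thetahat = fun x =>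
      -((Complex.ofReal (phil x) * deriv theta x
          - Complex.ofReal (deriv phil x) * theta x) / Complex.ofReal (phil x)))
    (hphihat : phihat = fun x =>
      -((Complex.ofReal (phil x) * deriv phi x
          - Complex.ofReal (deriv phil x) * phi x)
        / ((z - lam) * Complex.ofReal (phil x)))) :
    ∀ x ∈ E, thetahat x * deriv phihat x - deriv thetahat x * phihat x = 1 := by
  intro x hx
  have hP := (hl_d1 x hx).hasDerivAt.ofReal_comp
  have hP' := (hl_d2 x hx).hasDerivAt.ofReal_comp
  have hP0 : (phil x : ℂ) ≠ 0 := Complex.ofReal_ne_zero.mpr (hl_pos x hx).ne'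
  have hPeq : -((deriv (deriv phil) x : ℝ) : ℂ) + (q x : ℂ) * phil x = (lam : ℂ) * phil x := by
    exact_mod_cast hl_eq x hx
  have hzl : z - lam ≠ 0 := sub_ne_zero.mpr hzlam
  have hθ := hasDerivAt_commutationTransform hP hP' (hth_d1 x hx).hasDerivAt
    (hth_d2 x hx).hasDerivAt hPeq (hth_eq x hx) hP0
  have hφ := (hasDerivAt_commutationTransform hP hP' (hph_d1 x hx).hasDerivAt
    (hph_d2 x hx).hasDerivAt hPeq (hph_eq x hx) hP0).const_mul (z - lam)⁻¹
  have hphihat' : phihat = fun y => (z - lam)⁻¹ * -((Complex.ofReal (phil y) * deriv phi y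
      - Complex.ofReal (deriv phil y) * phi y) / Complex.ofReal (phil y)) := by
    rw [hphihat]
    funext y
    rw [div_mul_eq_div_div_swap]
    ring
  subst hthetahat
  rw [hphihat', hθ.deriv, hφ.deriv]
  calc _ = (z - lam)⁻¹ * ((z - lam) * (theta x * deriv phi x - deriv theta x * phi x)) := by
        rw [← commutationTransform_wronskian hP0]
        ring
    _ = 1 := by rw [hW x hx, mul_one, inv_mul_cancel₀ hzl]

/-- If `θ, φ` is a fundamental system (`W(θ,φ) ≡ 1`) of
`-u'' + q u = z u` and `φ_λ > 0` solves `-φ'' + q φ = λ φ` with `z ≠ λ`, then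
the normalized single commutation transforms
`θ̂ = -W(φ_λ,θ)/φ_λ` and `φ̂ = -W(φ_λ,φ)/((z-λ)φ_λ)` satisfy `W(θ̂,φ̂) ≡ 1`. -/
theorem stmt_3 (a b : EReal) (hab : a < b)
    (q : ℝ → ℝ) (lam : ℝ) (z : ℂ) (hzlam : z ≠ (lam : ℂ))
    (phil : ℝ → ℝ) (theta phi : ℝ → ℂ)
    (E : Set ℝ) (hE : E = {x : ℝ | a < (x : EReal) ∧ (x : EReal) < b})
    (hl_d1 : ∀ x ∈ E, DifferentiableAt ℝ phil x)
    (hl_d2 : ∀ x ∈ E, DifferentiableAt ℝ (deriv phil) x)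
    (hl_pos : ∀ x ∈ E, 0 < phil x)
    (hl_eq : ∀ x ∈ E, -deriv (deriv phil) x + q x * phil x = lam * phil x)
    (hth_d1 : ∀ x ∈ E, DifferentiableAt ℝ theta x)
    (hth_d2 : ∀ x ∈ E, DifferentiableAt ℝ (deriv theta) x)
    (hth_eq : ∀ x ∈ E, -deriv (deriv theta) x + (q x : ℂ) * theta x = z * theta x)
    (hph_d1 : ∀ x ∈ E, DifferentiableAt ℝ phi x)
    (hph_d2 : ∀ x ∈ E, DifferentiableAt ℝ (deriv phi) x)
    (hph_eq : ∀ x ∈ E, -deriv (deriv phi) x + (q x : ℂ) * phi x = z * phi x)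
    (hW : ∀ x ∈ E, theta x * deriv phi x - deriv theta x * phi x = 1)
    (thetahat phihat : ℝ → ℂ)
    (hthetahat : thetahat = fun x =>
      -((Complex.ofReal (phil x) * deriv theta x
          - Complex.ofReal (deriv phil x) * theta x) / Complex.ofReal (phil x)))
    (hphihat : phihat = fun x =>
      -((Complex.ofReal (phil x) * deriv phi x
          - Complex.ofReal (deriv phil x) * phi x)
        / ((z - lam) * Complex.ofReal (phil x)))) :
    ∀ x ∈ E, thetahat x * deriv phihat x - deriv thetahat x * phihat x = 1 :=
  stmt_3_general q lam z hzlam phil theta phi E hl_d1 hl_d2 hl_pos hl_eq hth_d1 hth_d2 hth_eq hph_d1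
    hph_d2 hph_eq hW thetahat phihat hthetahat hphihat
end

section
/- Let $-\infty\le a<b\le\infty$, $q:(a,b)\to\mathbb{R}$, $\lambda\in\mathbb{R}$, and let $\phi_\lambda:(a,b)\to\mathbb{R}$ be twice differentiable with $-\phi_\lambda''+q\phi_\lambda = \lambda\phi_\lambda$ on $(a,b)$. Let $S:(a,b)\to\mathbb{R}$ be differentiable with $S'(x)=\phi_\lambda(x)^2$ and $S(x)>0$ for all $x\in(a,b)$, and set $\tilde\phi = \phi_\lambda/S$ and $q_S(x) = q(x) - 2\tfrac{d}{dx}\big(\tfrac{\phi_\lambda(x)^2}{S(x)}\big)$. Then for every $z\in\mathbb{C}$ with $z\ne\lambda$ and every twice differentiable $u:(a,b)\to\mathbb{C}$ with $-u''+qu=zu$ on $(a,b)$, the function $u_S(x) = u(x) + \tfrac{1}{z-\lambda}\,\tilde\phi(x)\,W_x(\phi_\lambda,u)$ is twice differentiable and satisfies $-u_S''(x) + q_S(x)u_S(x) = z\,u_S(x)$ for all $x\in(a,b)$. -/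
/-!
The quotient `ψ = φ/S` solves the transformed equation `-ψ'' + q_S ψ = λ ψ`, and the Wronskian
obeys `W(φ, u)' = (λ - z) φ u`. Differentiating `u_S = u + (z - λ)⁻¹ ψ W` twice, the terms
carrying `W` are absorbed by the equation for `ψ`, and what is left is `u (q_S - q + 2 (ψ φ)')`,
which vanishes because `ψ φ = φ² / S`.
-/

open Filter Topology

theorem hasDerivAt_deriv_of_eventually_hasDerivAt {F : Type*} [NormedAddCommGroup F]
    [NormedSpace ℝ F] {f f' : ℝ → F} {f'' : F} {x : ℝ}
    (hf : ∀ᶠ y in 𝓝 x, HasDerivAt f (f' y) y) (hf' : HasDerivAt f' f'' x) :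
    HasDerivAt (deriv f) f'' x :=
  hf'.congr_of_eventuallyEq (hf.mono fun _ hy => hy.deriv)

noncomputable def wronskian (φ : ℝ → ℝ) (u : ℝ → ℂ) (x : ℝ) : ℂ :=
  φ x * deriv u x - deriv φ x * u x

theorem hasDerivAt_wronskian_s5 {q φ : ℝ → ℝ} {lam : ℝ} {u : ℝ → ℂ} {z : ℂ} {x : ℝ}
    (hφ : DifferentiableAt ℝ φ x) (hφ' : HasDerivAt (deriv φ) ((q x - lam) * φ x) x)
    (hu : DifferentiableAt ℝ u x) (hu' : HasDerivAt (deriv u) ((q x - z) * u x) x) :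
    HasDerivAt (wronskian φ u) ((lam - z) * (φ x * u x)) x := by
  refine ((hφ.hasDerivAt.ofReal_comp.mul hu').sub
    (hφ'.ofReal_comp.mul hu.hasDerivAt)).congr_deriv ?_
  push_cast
  ring

theorem deriv_sq_div {φ S : ℝ → ℝ} {x : ℝ} (hφ : DifferentiableAt ℝ φ x)
    (hS : DifferentiableAt ℝ S x) (hS0 : S x ≠ 0) :
    deriv (fun y => φ y ^ 2 / S y) x
      = deriv (fun y => φ y / S y) x * φ x + φ x / S x * deriv φ x := by
  have h : (fun y => φ y ^ 2 / S y) = fun y => φ y / S y * φ y := by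
    ext y; ring
  rw [h, deriv_fun_mul (hφ.fun_div hS hS0) hφ]

theorem hasDerivAt_deriv_div_weight {q φ S : ℝ → ℝ} {lam x : ℝ}
    (hφ : ∀ᶠ y in 𝓝 x, DifferentiableAt ℝ φ y)
    (hφ' : HasDerivAt (deriv φ) ((q x - lam) * φ x) x)
    (hS : ∀ᶠ y in 𝓝 x, HasDerivAt S (φ y ^ 2) y) (hS0 : S x ≠ 0) :
    HasDerivAt (deriv fun y => φ y / S y)
      ((q x - 2 * deriv (fun y => φ y ^ 2 / S y) x - lam) * (φ x / S x)) x := by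
  have hS0' : ∀ᶠ y in 𝓝 x, S y ≠ 0 := hS.self_of_nhds.continuousAt.eventually_ne hS0
  have hψ : ∀ᶠ y in 𝓝 x, HasDerivAt (fun y => φ y / S y)
      ((deriv φ y * S y - φ y * φ y ^ 2) / S y ^ 2) y := by
    filter_upwards [hφ, hS, hS0'] with y hφy hSy hS0y using hφy.hasDerivAt.fun_div hSy hS0y
  have hφx := hφ.self_of_nhds
  have hSx := hS.self_of_nhds
  have hψ' := ((hφ'.fun_mul hSx).fun_sub
    (hφx.hasDerivAt.fun_mul (hφx.hasDerivAt.fun_pow 2))).fun_div (hSx.fun_pow 2) (pow_ne_zero 2 hS0)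
  refine (hasDerivAt_deriv_of_eventually_hasDerivAt hψ hψ').congr_deriv ?_
  rw [deriv_sq_div hφx hSx.differentiableAt hS0, hψ.self_of_nhds.deriv]
  field_simp
  ring

noncomputable def doubleCommutation (φ S : ℝ → ℝ) (lam : ℝ) (z : ℂ) (u : ℝ → ℂ) (x : ℝ) :
    ℂ :=
  u x + (z - lam)⁻¹ * ((φ x / S x : ℝ) : ℂ) * wronskian φ u x

noncomputable def commutedPotential (q φ S : ℝ → ℝ) (x : ℝ) : ℝ :=
  q x - 2 * deriv (fun y => φ y ^ 2 / S y) x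

theorem doubleCommutation_solves {q φ S : ℝ → ℝ} {lam : ℝ} {u : ℝ → ℂ} {z : ℂ} {x : ℝ}
    (hz : z ≠ lam) (hφ : ∀ᶠ y in 𝓝 x, DifferentiableAt ℝ φ y)
    (hφ' : ∀ᶠ y in 𝓝 x, HasDerivAt (deriv φ) ((q y - lam) * φ y) y)
    (hS : ∀ᶠ y in 𝓝 x, HasDerivAt S (φ y ^ 2) y) (hS0 : S x ≠ 0)
    (hu : ∀ᶠ y in 𝓝 x, DifferentiableAt ℝ u y)
    (hu' : ∀ᶠ y in 𝓝 x, HasDerivAt (deriv u) ((q y - z) * u y) y) :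
    DifferentiableAt ℝ (doubleCommutation φ S lam z u) x ∧
      DifferentiableAt ℝ (deriv (doubleCommutation φ S lam z u)) x ∧
      -deriv (deriv (doubleCommutation φ S lam z u)) x
          + (commutedPotential q φ S x : ℂ) * doubleCommutation φ S lam z u x
        = z * doubleCommutation φ S lam z u x := by
  set ψ := fun y => φ y / S y with hψ_def
  have hzl : z - lam ≠ 0 := sub_ne_zero.mpr hz
  have hψ : ∀ᶠ y in 𝓝 x, HasDerivAt ψ (deriv ψ y) y := by
    filter_upwards [hφ, hS, hS.self_of_nhds.continuousAt.eventually_ne hS0] with y hφy hSy hS0y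
    exact (hφy.fun_div hSy.differentiableAt hS0y).hasDerivAt
  have hψ' := hasDerivAt_deriv_div_weight hφ hφ'.self_of_nhds hS hS0
  have hW : ∀ᶠ y in 𝓝 x, HasDerivAt (wronskian φ u) ((lam - z) * (φ y * u y)) y := by
    filter_upwards [hφ, hφ', hu, hu'] with y hφy hφ'y huy hu'y
    exact hasDerivAt_wronskian_s5 hφy hφ'y huy hu'y
  have hv : ∀ᶠ y in 𝓝 x, HasDerivAt (doubleCommutation φ S lam z u)
      (deriv u y + (z - lam)⁻¹ * deriv ψ y * wronskian φ u y - ψ y * (φ y * u y)) y := by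
    filter_upwards [hu, hψ, hW] with y huy hψy hWy
    refine (huy.hasDerivAt.add ((hψy.ofReal_comp.const_mul _).mul hWy)).congr_deriv ?_
    field_simp
    ring
  have hφx := hφ.self_of_nhds
  have hux := hu.self_of_nhds
  have hv' := (hu'.self_of_nhds.fun_add
      ((hψ'.ofReal_comp.const_mul (z - lam)⁻¹).fun_mul hW.self_of_nhds)).fun_sub
    (hψ.self_of_nhds.ofReal_comp.fun_mul (hφx.hasDerivAt.ofReal_comp.fun_mul hux.hasDerivAt))
  have huS'' := hasDerivAt_deriv_of_eventually_hasDerivAt hv hv'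
  refine ⟨hv.self_of_nhds.differentiableAt, huS''.differentiableAt, ?_⟩
  rw [huS''.deriv, commutedPotential, deriv_sq_div hφx hS.self_of_nhds.differentiableAt hS0]
  simp only [doubleCommutation, wronskian, hψ_def]
  push_cast
  field_simp
  ring

theorem stmt_5_general (a b : EReal)
    (q phil Sw : ℝ → ℝ) (lam : ℝ)
    (E : Set ℝ) (hE : E = {x : ℝ | a < (x : EReal) ∧ (x : EReal) < b})
    (hl_d1 : ∀ x ∈ E, DifferentiableAt ℝ phil x)
    (hl_d2 : ∀ x ∈ E, DifferentiableAt ℝ (deriv phil) x)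
    (hl_eq : ∀ x ∈ E, -deriv (deriv phil) x + q x * phil x = lam * phil x)
    (hS_d : ∀ x ∈ E, HasDerivAt Sw (phil x ^ 2) x)
    (hS_pos : ∀ x ∈ E, 0 < Sw x)
    (qS : ℝ → ℝ)
    (hqS : qS = fun x => q x - 2 * deriv (fun y => phil y ^ 2 / Sw y) x) :
    ∀ z : ℂ, z ≠ (lam : ℂ) → ∀ u : ℝ → ℂ,
      (∀ x ∈ E, DifferentiableAt ℝ u x) →
      (∀ x ∈ E, DifferentiableAt ℝ (deriv u) x) →
      (∀ x ∈ E, -deriv (deriv u) x + (q x : ℂ) * u x = z * u x) →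
      ∀ uS : ℝ → ℂ,
        uS = (fun x => u x + (z - lam)⁻¹ * ((phil x / Sw x : ℝ) : ℂ) *
          (Complex.ofReal (phil x) * deriv u x
            - Complex.ofReal (deriv phil x) * u x)) →
        ∀ x ∈ E,
          DifferentiableAt ℝ uS x ∧ DifferentiableAt ℝ (deriv uS) x ∧
          -deriv (deriv uS) x + (qS x : ℂ) * uS x = z * uS x := by
  intro z hz u hu_d1 hu_d2 hu_eq uS huS x hx
  subst hqS huS
  have hE_nhds : E ∈ 𝓝 x :=
    (hE ▸ isOpen_Ioo.preimage continuous_coe_real_ereal : IsOpen E).mem_nhds hx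
  have hφ'' : ∀ᶠ y in 𝓝 x, HasDerivAt (deriv phil) ((q y - lam) * phil y) y := by
    filter_upwards [hE_nhds] with y hy
    exact (hl_d2 y hy).hasDerivAt.congr_deriv (by linarith [hl_eq y hy])
  have hu'' : ∀ᶠ y in 𝓝 x, HasDerivAt (deriv u) ((q y - z) * u y) y := by
    filter_upwards [hE_nhds] with y hy
    exact (hu_d2 y hy).hasDerivAt.congr_deriv (by linear_combination -hu_eq y hy)
  exact doubleCommutation_solves hz (eventually_of_mem hE_nhds hl_d1) hφ''
    (eventually_of_mem hE_nhds hS_d) (hS_pos x hx).ne' (eventually_of_mem hE_nhds hu_d1) hu''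

/-- the double commutation transform with weight `S`
(`S' = φ_λ²`, `S > 0`): if `u` solves `-u'' + q u = z u` with `z ≠ λ`, then
`u_S = u + (z-λ)⁻¹ (φ_λ/S) W(φ_λ,u)` is twice differentiable and solves
`-u_S'' + q_S u_S = z u_S`, where `q_S = q - 2 (φ_λ²/S)'`. -/
theorem stmt_5 (a b : EReal) (hab : a < b)
    (q phil Sw : ℝ → ℝ) (lam : ℝ)
    (E : Set ℝ) (hE : E = {x : ℝ | a < (x : EReal) ∧ (x : EReal) < b})
    (hl_d1 : ∀ x ∈ E, DifferentiableAt ℝ phil x)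
    (hl_d2 : ∀ x ∈ E, DifferentiableAt ℝ (deriv phil) x)
    (hl_eq : ∀ x ∈ E, -deriv (deriv phil) x + q x * phil x = lam * phil x)
    (hS_d : ∀ x ∈ E, HasDerivAt Sw (phil x ^ 2) x)
    (hS_pos : ∀ x ∈ E, 0 < Sw x)
    (qS : ℝ → ℝ)
    (hqS : qS = fun x => q x - 2 * deriv (fun y => phil y ^ 2 / Sw y) x) :
    ∀ z : ℂ, z ≠ (lam : ℂ) → ∀ u : ℝ → ℂ,
      (∀ x ∈ E, DifferentiableAt ℝ u x) →
      (∀ x ∈ E, DifferentiableAt ℝ (deriv u) x) →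
      (∀ x ∈ E, -deriv (deriv u) x + (q x : ℂ) * u x = z * u x) →
      ∀ uS : ℝ → ℂ,
        uS = (fun x => u x + (z - lam)⁻¹ * ((phil x / Sw x : ℝ) : ℂ) *
          (Complex.ofReal (phil x) * deriv u x
            - Complex.ofReal (deriv phil x) * u x)) →
        ∀ x ∈ E,
          DifferentiableAt ℝ uS x ∧ DifferentiableAt ℝ (deriv uS) x ∧
          -deriv (deriv uS) x + (qS x : ℂ) * uS x = z * uS x :=
  stmt_5_general a b q phil Sw lam E hE hl_d1 hl_d2 hl_eq hS_d hS_pos qS hqS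
end

section
/- Let $n\in\mathbb{N}$, let $A\in\mathbb{C}^{n\times n}$, let $S_0\in\mathbb{C}^{n\times n}$ with $S_0=S_0^*$, and let $\Lambda_1^0,\Lambda_2^0\in\mathbb{C}^n$ satisfy $A S_0 - S_0 A^* = \Lambda^0 J (\Lambda^0)^*$, where $\Lambda^0=[\Lambda_1^0\ \Lambda_2^0]\in\mathbb{C}^{n\times 2}$ and $J=\begin{pmatrix}0&1\\-1&0\end{pmatrix}$. Let $q:\mathbb{R}\to\mathbb{R}$ and let $\Lambda_1,\Lambda_2:\mathbb{R}\to\mathbb{C}^n$ be differentiable with $\Lambda_1(0)=\Lambda_1^0$, $\Lambda_2(0)=\Lambda_2^0$, $\Lambda_1'(x)=A\Lambda_2(x)-q(x)\Lambda_2(x)$ and $\Lambda_2'(x)=-\Lambda_1(x)$, and let $S:\mathbb{R}\to\mathbb{C}^{n\times n}$ be differentiable with $S(0)=S_0$ and $S'(x)=\Lambda_2(x)\Lambda_2(x)^*$. Then for every $x\in\mathbb{R}$: $A S(x) - S(x) A^* = \Lambda(x) J \Lambda(x)^*$, where $\Lambda(x)=[\Lambda_1(x)\ \Lambda_2(x)]$.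 In particular $S(x)=S(x)^*$ for all $x$. -/
/-!
Write `Λ J Λ* = Λ₁ Λ₂* - Λ₂ Λ₁*`. By the differential equations, `A S - S A*` has derivative
`A Λ₂ Λ₂* - Λ₂ Λ₂* A* = (A Λ₂) Λ₂* - Λ₂ (A Λ₂)*`, and so has `Λ₁ Λ₂* - Λ₂ Λ₁*`. Hence the defect
`A S - S A* - Λ J Λ*` is constant, and it vanishes at `x = 0`. Likewise `S - S*` has derivative
`Λ₂ Λ₂* - (Λ₂ Λ₂*)* = 0` and vanishes at `0`.
-/

namespace Matrix

variable {𝕜 : Type*} [RCLike 𝕜] {l m n p : Type*}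

/-- `Matrix` carries no global norm, so derivatives of matrix functions are taken entrywise. -/
def HasEntrywiseDerivAt (F : ℝ → Matrix m n 𝕜) (F' : Matrix m n 𝕜) (x : ℝ) : Prop :=
  ∀ i j, HasDerivAt (fun t => F t i j) (F' i j) x

namespace HasEntrywiseDerivAt

variable {F G : ℝ → Matrix m n 𝕜} {F' G' : Matrix m n 𝕜} {x : ℝ}

theorem sub (hF : HasEntrywiseDerivAt F F' x) (hG : HasEntrywiseDerivAt G G' x) :
    HasEntrywiseDerivAt (fun t => F t - G t) (F' - G') x :=
  fun i j => (hF i j).sub (hG i j)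

theorem conjTranspose (hF : HasEntrywiseDerivAt F F' x) :
    HasEntrywiseDerivAt (fun t => (F t)ᴴ) F'ᴴ x :=
  fun i j => (hF j i).star

theorem const_mul [Fintype m] (A : Matrix l m 𝕜) (hF : HasEntrywiseDerivAt F F' x) :
    HasEntrywiseDerivAt (fun t => A * F t) (A * F') x := fun i j => by
  simpa only [mul_apply] using HasDerivAt.fun_sum fun k _ => (hF k j).const_mul (A i k)

theorem mul_const [Fintype n] (B : Matrix n p 𝕜) (hF : HasEntrywiseDerivAt F F' x) :
    HasEntrywiseDerivAt (fun t => F t * B) (F' * B) x := fun i j => by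
  simpa only [mul_apply] using HasDerivAt.fun_sum fun k _ => (hF i k).mul_const (B k j)

theorem vecMulVec_star {u : ℝ → m → 𝕜} {v : ℝ → n → 𝕜} {u' : m → 𝕜} {v' : n → 𝕜}
    (hu : ∀ i, HasDerivAt (fun t => u t i) (u' i) x)
    (hv : ∀ j, HasDerivAt (fun t => v t j) (v' j) x) :
    HasEntrywiseDerivAt (fun t => vecMulVec (u t) (star (v t)))
      (vecMulVec u' (star (v x)) + vecMulVec (u x) (star v')) x :=
  fun i j => (hu i).mul (hv j).star

end HasEntrywiseDerivAt

theorem is_const_of_hasEntrywiseDerivAt_zero {F : ℝ → Matrix m n 𝕜}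
    (hF : ∀ t, HasEntrywiseDerivAt F 0 t) (x y : ℝ) : F x = F y :=
  ext fun i j =>
    is_const_of_deriv_eq_zero (fun t => (hF t i j).differentiableAt) (fun t => (hF t i j).deriv) x y

theorem of_mul_symplectic_mul_conjTranspose {R : Type*} [Ring R] [StarRing R] (u v : m → R) :
    (of fun i => ![u i, v i]) * (!![0, 1; -1, 0] : Matrix (Fin 2) (Fin 2) R) *
        (of fun i => ![u i, v i])ᴴ =
      vecMulVec u (star v) - vecMulVec v (star u) := by
  ext i j
  simp [mul_apply, Fin.sum_univ_two, vecMulVec_apply, sub_eq_neg_add]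

theorem mul_vecMulVec_sub_vecMulVec_mul_conjTranspose [Fintype n] (A : Matrix n n 𝕜) (v : n → 𝕜) :
    A * vecMulVec v (star v) - vecMulVec v (star v) * Aᴴ =
      vecMulVec (A *ᵥ v) (star v) - vecMulVec v (star (A *ᵥ v)) := by
  rw [mul_vecMulVec, vecMulVec_mul, star_mulVec]

/-- The `q`-terms cancel because `q` is real. -/
theorem hasEntrywiseDerivAt_gbdt [Fintype n] (A : Matrix n n 𝕜) (q : ℝ → ℝ) (L1 L2 : ℝ → n → 𝕜)
    (S : ℝ → Matrix n n 𝕜) {x : ℝ}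
    (hL1 : ∀ i, HasDerivAt (fun t => L1 t i) ((A *ᵥ L2 x) i - (q x : 𝕜) * L2 x i) x)
    (hL2 : ∀ i, HasDerivAt (fun t => L2 t i) (-L1 x i) x)
    (hS : HasEntrywiseDerivAt S (vecMulVec (L2 x) (star (L2 x))) x) :
    HasEntrywiseDerivAt (fun t => A * S t - S t * Aᴴ -
      (vecMulVec (L1 t) (star (L2 t)) - vecMulVec (L2 t) (star (L1 t)))) 0 x := by
  have h := ((hS.const_mul A).sub (hS.mul_const Aᴴ)).sub
    ((HasEntrywiseDerivAt.vecMulVec_star hL1 hL2).sub (HasEntrywiseDerivAt.vecMulVec_star hL2 hL1))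
  rw [mul_vecMulVec_sub_vecMulVec_mul_conjTranspose] at h
  convert h using 1
  ext i j
  simp only [zero_apply, sub_apply, add_apply, vecMulVec_apply, Pi.star_apply, star_neg, star_sub,
    star_mul', RCLike.star_def, RCLike.conj_ofReal]
  ring

end Matrix

open Matrix

theorem stmt_10_general (n : ℕ)
    (A S0 : Matrix (Fin n) (Fin n) ℂ) (hS0 : S0 = S0ᴴ)
    (L1_0 L2_0 : Fin n → ℂ)
    (J : Matrix (Fin 2) (Fin 2) ℂ) (hJ : J = !![0, 1; -1, 0])
    (L0 : Matrix (Fin n) (Fin 2) ℂ)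
    (hL0 : L0 = Matrix.of fun i => ![L1_0 i, L2_0 i])
    (hid0 : A * S0 - S0 * Aᴴ = L0 * J * L0ᴴ)
    (q : ℝ → ℝ) (L1 L2 : ℝ → Fin n → ℂ) (S : ℝ → Matrix (Fin n) (Fin n) ℂ)
    (hL1_0 : L1 0 = L1_0) (hL2_0 : L2 0 = L2_0) (hS_0 : S 0 = S0)
    (hL1' : ∀ (x : ℝ) (i : Fin n),
      HasDerivAt (fun t => L1 t i) (A.mulVec (L2 x) i - (q x : ℂ) * L2 x i) x)
    (hL2' : ∀ (x : ℝ) (i : Fin n),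
      HasDerivAt (fun t => L2 t i) (-(L1 x i)) x)
    (hS' : ∀ (x : ℝ) (i j : Fin n),
      HasDerivAt (fun t => S t i j) (L2 x i * star (L2 x j)) x)
    (L : ℝ → Matrix (Fin n) (Fin 2) ℂ)
    (hL : L = fun x => Matrix.of fun i => ![L1 x i, L2 x i]) :
    ∀ x : ℝ, A * S x - S x * Aᴴ = L x * J * (L x)ᴴ ∧ S x = (S x)ᴴ := by
  subst hJ hL hL0 hL1_0 hL2_0 hS_0
  simp only [of_mul_symplectic_mul_conjTranspose] at hid0 ⊢
  have hS : ∀ t, HasEntrywiseDerivAt S (vecMulVec (L2 t) (star (L2 t))) t := hS'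
  intro x
  have hid := is_const_of_hasEntrywiseDerivAt_zero
    (fun t => hasEntrywiseDerivAt_gbdt A q L1 L2 S (hL1' t) (hL2' t) (hS t)) x 0
  have hsym : ∀ t, HasEntrywiseDerivAt (fun s => S s - (S s)ᴴ) 0 t := fun t => by
    simpa [conjTranspose_vecMulVec] using (hS t).sub (hS t).conjTranspose
  constructor
  · rwa [hid0, sub_self, sub_eq_zero] at hid
  · rw [← sub_eq_zero, is_const_of_hasEntrywiseDerivAt_zero hsym x 0, ← hS0, sub_self]

/-- the basic GBDT matrix identity. If
`A S₀ - S₀ A* = Λ⁰ J (Λ⁰)*` with `S₀ = S₀*`, and `Λ₁, Λ₂, S` solve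
`Λ₁' = A Λ₂ - q Λ₂`, `Λ₂' = -Λ₁`, `S' = Λ₂ Λ₂*` with the given initial values,
then `A S(x) - S(x) A* = Λ(x) J Λ(x)*` (so in particular `S(x) = S(x)*`)
for all `x ∈ ℝ`, where `Λ(x) = [Λ₁(x) Λ₂(x)]`. -/
theorem stmt_10 (n : ℕ) (hn : 0 < n)
    (A S0 : Matrix (Fin n) (Fin n) ℂ) (hS0 : S0 = S0ᴴ)
    (L1_0 L2_0 : Fin n → ℂ)
    (J : Matrix (Fin 2) (Fin 2) ℂ) (hJ : J = !![0, 1; -1, 0])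
    (L0 : Matrix (Fin n) (Fin 2) ℂ)
    (hL0 : L0 = Matrix.of fun i => ![L1_0 i, L2_0 i])
    (hid0 : A * S0 - S0 * Aᴴ = L0 * J * L0ᴴ)
    (q : ℝ → ℝ) (L1 L2 : ℝ → Fin n → ℂ) (S : ℝ → Matrix (Fin n) (Fin n) ℂ)
    (hL1_0 : L1 0 = L1_0) (hL2_0 : L2 0 = L2_0) (hS_0 : S 0 = S0)
    (hL1' : ∀ (x : ℝ) (i : Fin n),
      HasDerivAt (fun t => L1 t i) (A.mulVec (L2 x) i - (q x : ℂ) * L2 x i) x)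
    (hL2' : ∀ (x : ℝ) (i : Fin n),
      HasDerivAt (fun t => L2 t i) (-(L1 x i)) x)
    (hS' : ∀ (x : ℝ) (i j : Fin n),
      HasDerivAt (fun t => S t i j) (L2 x i * star (L2 x j)) x)
    (L : ℝ → Matrix (Fin n) (Fin 2) ℂ)
    (hL : L = fun x => Matrix.of fun i => ![L1 x i, L2 x i]) :
    ∀ x : ℝ, A * S x - S x * Aᴴ = L x * J * (L x)ᴴ ∧ S x = (S x)ᴴ :=
  stmt_10_general n A S0 hS0 L1_0 L2_0 J hJ L0 hL0 hid0 q L1 L2 S hL1_0 hL2_0 hS_0 hL1' hL2' hS' L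
    hL
end

section
/- Let $n\in\mathbb{N}$, $A\in\mathbb{C}^{n\times n}$, $S\in\mathbb{C}^{n\times n}$ invertible with $S=S^*$, and $\Lambda\in\mathbb{C}^{n\times 2}$ such that $AS-SA^* = \Lambda J \Lambda^*$, where $J=\begin{pmatrix}0&1\\-1&0\end{pmatrix}$. For $z\in\mathbb{C}$ such that both $zI_n-A$ and $\bar z I_n - A$ are invertible, define $w_A(z) = I_2 + J\,\Lambda^* S^{-1}(zI_n-A)^{-1}\Lambda$. Then $w_A(\bar z)^*\, J\, w_A(z) = J$. -/
/-!
Put `Q = zI - A` and `P = zI - A* = (z̄I - A)*`. The identity `AS - SA* = ΛJΛ*` says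
`S P - Q S = ΛJΛ*`, and multiplying it by `P⁻¹S⁻¹` on the left and by `S⁻¹Q⁻¹` on the right
gives a resolvent identity `X J Y = Y - X` for `X = Λ*P⁻¹S⁻¹Λ` and `Y = Λ*S⁻¹Q⁻¹Λ`.
Since `J* = -J` and `S = S*`, `w(z̄)* = 1 - XJ` and `w(z) = 1 + JY`, and with `J² = -1` the
product `(1 - XJ) J (1 + JY)` collapses to `J`.
-/

open Matrix

theorem one_sub_mul_mul_one_add_of_mul_self_eq_neg_one {R : Type*} [Ring R] {J X Y : R}
    (hJ : J * J = -1) (h : X * J * Y = Y - X) : (1 - X * J) * J * (1 + J * Y) = J := by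
  have hXJJ : (1 - X * J) * J = J + X := by
    rw [sub_mul, one_mul, mul_assoc, hJ, mul_neg_one, sub_neg_eq_add]
  calc (1 - X * J) * J * (1 + J * Y) = J + J * J * Y + X + X * J * Y := by
        rw [hXJJ]; noncomm_ring
    _ = J := by rw [hJ, h]; noncomm_ring

theorem Matrix.inv_mul_inv_mul_sub_mul_mul_inv {n R : Type*} [Fintype n] [DecidableEq n]
    [CommRing R] (S P Q : Matrix n n R) (hS : IsUnit S.det) (hP : IsUnit P.det)
    (hQ : IsUnit Q.det) :
    P⁻¹ * S⁻¹ * (S * P - Q * S) * (S⁻¹ * Q⁻¹) = S⁻¹ * Q⁻¹ - P⁻¹ * S⁻¹ := by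
  simp [Matrix.mul_sub, Matrix.sub_mul, Matrix.mul_assoc, hS, hP, hQ]

section TransferMatrix

variable {m n R : Type*} [Fintype m] [DecidableEq m] [Fintype n] [DecidableEq n]
  [CommRing R] [StarRing R]

noncomputable def transferMatrix (J : Matrix m m R) (L : Matrix n m R) (S A : Matrix n n R)
    (ζ : R) : Matrix m m R :=
  1 + J * Lᴴ * S⁻¹ * (ζ • 1 - A)⁻¹ * L

theorem conjTranspose_transferMatrix {J : Matrix m m R} {S : Matrix n n R} (hJ : Jᴴ = -J)
    (hS : Sᴴ = S) (L : Matrix n m R) (A : Matrix n n R) (ζ : R) :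
    (transferMatrix J L S A ζ)ᴴ = 1 - Lᴴ * ((star ζ • 1 - Aᴴ)⁻¹ * S⁻¹) * L * J := by
  have hres : (ζ • (1 : Matrix n n R) - A)ᴴ = star ζ • 1 - Aᴴ := by simp
  simp only [transferMatrix, conjTranspose_add, conjTranspose_one, conjTranspose_mul,
    conjTranspose_conjTranspose, conjTranspose_nonsing_inv, hres, hS, hJ]
  simp only [Matrix.mul_neg, sub_eq_add_neg, Matrix.mul_assoc]

theorem transferMatrix_star_conjTranspose_mul_mul {J : Matrix m m R} {L : Matrix n m R}
    {S A : Matrix n n R} {z : R} (hJ2 : J * J = -1) (hJ : Jᴴ = -J) (hS : IsUnit S.det)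
    (hSH : Sᴴ = S) (hid : A * S - S * Aᴴ = L * J * Lᴴ) (hz : IsUnit (z • 1 - A).det)
    (hz' : IsUnit (star z • 1 - A).det) :
    (transferMatrix J L S A (star z))ᴴ * J * transferMatrix J L S A z = J := by
  set P : Matrix n n R := z • 1 - Aᴴ
  set Q : Matrix n n R := z • 1 - A
  have hP : IsUnit P.det := by
    have hPC : P = (star z • 1 - A)ᴴ := by simp [P]
    rw [hPC, det_conjTranspose]
    exact hz'.star
  have hsylvester : S * P - Q * S = L * J * Lᴴ := by
    simp only [P, Q, ← hid, Matrix.mul_sub, Matrix.sub_mul, Matrix.mul_smul, Matrix.smul_mul,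
      Matrix.mul_one, Matrix.one_mul]
    abel
  have hresolvent : Lᴴ * (P⁻¹ * S⁻¹) * L * J * (Lᴴ * (S⁻¹ * Q⁻¹) * L)
      = Lᴴ * (S⁻¹ * Q⁻¹) * L - Lᴴ * (P⁻¹ * S⁻¹) * L := by
    have := congrArg (fun M => Lᴴ * M * L) (inv_mul_inv_mul_sub_mul_mul_inv S P Q hS hP hz)
    simpa only [hsylvester, Matrix.mul_sub, Matrix.sub_mul, Matrix.mul_assoc] using this
  have hw : transferMatrix J L S A z = 1 + J * (Lᴴ * (S⁻¹ * Q⁻¹) * L) := by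
    simp only [transferMatrix, Q, Matrix.mul_assoc]
  rw [conjTranspose_transferMatrix hJ hSH, star_star, hw]
  exact one_sub_mul_mul_one_add_of_mul_self_eq_neg_one hJ2 hresolvent

end TransferMatrix

/-- `J`-symmetry of the GBDT transfer matrix in Lev Sakhnovich
form: if `S = S*` is invertible, `A S - S A* = Λ J Λ*`, and both `zI - A` and
`z̄I - A` are invertible, then
`w_A(z̄)* J w_A(z) = J` for `w_A(z) = I₂ + J Λ* S⁻¹ (zI - A)⁻¹ Λ`. -/
theorem stmt_11 (n : ℕ) (A S : Matrix (Fin n) (Fin n) ℂ)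
    (hSinv : IsUnit S.det) (hS : S = Sᴴ)
    (L : Matrix (Fin n) (Fin 2) ℂ)
    (J : Matrix (Fin 2) (Fin 2) ℂ) (hJ : J = !![0, 1; -1, 0])
    (hid : A * S - S * Aᴴ = L * J * Lᴴ)
    (z : ℂ)
    (hz1 : IsUnit (z • (1 : Matrix (Fin n) (Fin n) ℂ) - A).det)
    (hz2 : IsUnit ((starRingEnd ℂ) z • (1 : Matrix (Fin n) (Fin n) ℂ) - A).det)
    (w : ℂ → Matrix (Fin 2) (Fin 2) ℂ)
    (hw : ∀ ζ : ℂ,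
      w ζ = 1 + J * Lᴴ * S⁻¹ * (ζ • (1 : Matrix (Fin n) (Fin n) ℂ) - A)⁻¹ * L) :
    (w ((starRingEnd ℂ) z))ᴴ * J * w z = J := by
  obtain rfl : w = transferMatrix J L S A := funext hw
  have hJ2 : J * J = -1 := by simp [hJ, one_fin_two]
  have hJH : Jᴴ = -J := by
    subst hJ
    ext i j
    fin_cases i <;> fin_cases j <;> simp
  exact transferMatrix_star_conjTranspose_mul_mul hJ2 hJH hSinv hS.symm hid hz1 hz2
end

section
/- Let $\lambda\in\mathbb{R}$, $\gamma\in(0,\infty)$, and let $\phi:(0,\infty)\to\mathbb{R}$ be differentiable with $\phi^2$ integrable on $(0,x)$ for each $x>0$. Set $S(x)=\gamma^{-1}+\int_0^x\phi(t)^2dt$, let $\Lambda(x)=(-\phi'(x),\ \phi(x))\in\mathbb{C}^{1\times 2}$, $J=\begin{pmatrix}0&1\\-1&0\end{pmatrix}$, and for $z\ne\lambda$ define $w_A(z,x) = I_2 + \tfrac{1}{S(x)(z-\lambda)}\,J\,\Lambda(x)^*\Lambda(x)$. Then for every differentiable $u:(0,\infty)\to\mathbb{C}$, every $x>0$, and every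 $z\ne\lambda$: $(1,0)\,w_A(z,x)\begin{pmatrix}u(x)\\u'(x)\end{pmatrix} = u(x) + \tfrac{\tilde\phi_\gamma(x)}{z-\lambda}W_x(\phi,u)$, where $\tilde\phi_\gamma(x)=\phi(x)/S(x)$ and $W_x(\phi,u)=\phi(x)u'(x)-\phi'(x)u(x)$. In other words, the GBDT with the $1\times1$ generalized eigenvalue $A=\lambda$ and data $\Lambda(x)=(-\phi'(x),\phi(x))$, $S(x)=\gamma^{-1}+\int_0^x\phi^2$, reproduces the double commutation transform. -/
open Set MeasureTheory Matrix

/-!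
The identity is pure linear algebra: for `Λ = (p, q)` the first row of `J Λᴴ Λ` is
`q̄ (p, q)`, so with `p = -φ'`, `q = φ` the correction term is `φ W(φ, u) / (S (z - λ))`.
-/

theorem symplectic_mul_conjTranspose_mul_mulVec_zero {R : Type*} [CommRing R] [StarRing R]
    (p q : R) (v : Fin 2 → R) :
    (((!![0, 1; -1, 0] : Matrix (Fin 2) (Fin 2) R) * (!![p, q] : Matrix (Fin 1) (Fin 2) R)ᴴ
        * !![p, q]) *ᵥ v) 0
      = star q * (p * v 0 + q * v 1) := by
  simp [mulVec, vecMul, dotProduct, Fin.sum_univ_succ, mul_apply]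
  ring

theorem stmt_12_general (lam : ℝ)
    (phi : ℝ → ℝ)
    (S : ℝ → ℝ)
    (J : Matrix (Fin 2) (Fin 2) ℂ) (hJ : J = !![0, 1; -1, 0])
    (L : ℝ → Matrix (Fin 1) (Fin 2) ℂ)
    (hL : L = fun x => !![(-(Complex.ofReal (deriv phi x))), Complex.ofReal (phi x)])
    (w : ℂ → ℝ → Matrix (Fin 2) (Fin 2) ℂ)
    (hw : ∀ (z : ℂ) (x : ℝ),
      w z x = 1 + (Complex.ofReal (S x) * (z - lam))⁻¹ • (J * (L x)ᴴ * L x)) :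
    ∀ u : ℝ → ℂ, (∀ x : ℝ, 0 < x → DifferentiableAt ℝ u x) →
      ∀ x : ℝ, 0 < x → ∀ z : ℂ, z ≠ (lam : ℂ) →
        (w z x).mulVec ![u x, deriv u x] 0
          = u x + ((phi x / S x : ℝ) : ℂ) / (z - lam) *
              (Complex.ofReal (phi x) * deriv u x
                - Complex.ofReal (deriv phi x) * u x) := by
  intro u _ x _ z _
  rw [hw, hJ, hL, add_mulVec, one_mulVec, smul_mulVec, Pi.add_apply, Pi.smul_apply,
    symplectic_mul_conjTranspose_mul_mulVec_zero]
  simp only [cons_val_zero, cons_val_one, Complex.star_def, Complex.conj_ofReal,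
    smul_eq_mul, Complex.ofReal_div, mul_inv]
  ring

/-- the GBDT with scalar (`n = 1`) generalized eigenvalue
`A = λ`, data `Λ(x) = (-φ'(x), φ(x))`, `S(x) = γ⁻¹ + ∫_0^x φ²`, reproduces the
double commutation transform: the first entry of
`w_A(z,x) (u(x), u'(x))ᵀ` equals `u(x) + (φ̃_γ(x)/(z-λ)) W_x(φ,u)` with
`φ̃_γ = φ/S`. -/
theorem stmt_12 (lam γ : ℝ) (hγ : 0 < γ)
    (phi : ℝ → ℝ)
    (hphi_d : ∀ x : ℝ, 0 < x → DifferentiableAt ℝ phi x)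
    (hphi_int : ∀ x : ℝ, 0 < x →
      IntegrableOn (fun t => phi t ^ 2) (Set.Ioo 0 x))
    (S : ℝ → ℝ) (hS : S = fun x => γ⁻¹ + ∫ t in Set.Ioo 0 x, phi t ^ 2)
    (J : Matrix (Fin 2) (Fin 2) ℂ) (hJ : J = !![0, 1; -1, 0])
    (L : ℝ → Matrix (Fin 1) (Fin 2) ℂ)
    (hL : L = fun x => !![(-(Complex.ofReal (deriv phi x))), Complex.ofReal (phi x)])
    (w : ℂ → ℝ → Matrix (Fin 2) (Fin 2) ℂ)
    (hw : ∀ (z : ℂ) (x : ℝ),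
      w z x = 1 + (Complex.ofReal (S x) * (z - lam))⁻¹ • (J * (L x)ᴴ * L x)) :
    ∀ u : ℝ → ℂ, (∀ x : ℝ, 0 < x → DifferentiableAt ℝ u x) →
      ∀ x : ℝ, 0 < x → ∀ z : ℂ, z ≠ (lam : ℂ) →
        (w z x).mulVec ![u x, deriv u x] 0
          = u x + ((phi x / S x : ℝ) : ℂ) / (z - lam) *
              (Complex.ofReal (phi x) * deriv u x
                - Complex.ofReal (deriv phi x) * u x) :=
  stmt_12_general lam phi S J hJ L hL w hw
end

section
/- Let $\lambda\in\mathbb{R}$, $k\in\mathbb{N}_0$, and let $\rho$ be a positive Borel measure on $\mathbb{R}$ supported in $[\lambda,\infty)$ with $\int_{\mathbb{R}}(1+t^2)^{-k-1}d\rho(t)<\infty$. Let $\hat\rho$ be the measure with $d\hat\rho(t)=(t-\lambda)\,d\rho(t)$; then $\hat\rho$ is a positive measure with $\int_{\mathbb{R}}(1+t^2)^{-k-2}d\hat\rho(t)<\infty$, and there exist real numbers $a_0,a_1,a_2$ such that for every $z\in\mathbb{C}\setminus[\lambda,\infty)$: $(z-\lambda)\int_{\mathbb{R}}\Big(\tfrac{1}{t-z}-\tfrac{t}{1+t^2}\Big)\tfrac{d\rho(t)}{(1+t^2)^{k}}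 \;=\; (1+z^2)\int_{\mathbb{R}}\Big(\tfrac{1}{t-z}-\tfrac{t}{1+t^2}\Big)\tfrac{d\hat\rho(t)}{(1+t^2)^{k+1}} \;+\; a_0 + a_1 z + a_2 z^2$, where all integrals converge absolutely. -/
/-!
With `K(t, z) = 1/(t - z) - t/(1 + t²) = (1 + t z)/((1 + t²)(t - z))` one has the pointwise identity
`(z - λ) K = (1 + z²) (t - λ)/(1 + t²) K + (-(1 + λ t) - λ (1 + t²) z + t (t - λ) z²)/(1 + t²)²`.
Multiplying by `(1 + t²)⁻ᵏ` and integrating against `ρ`, the first term becomes the `ρ̂`-integral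
and the second a quadratic polynomial in `z` with real coefficients. For `z ∉ [λ, ∞)` the distance
from `z` to the support of `ρ` is positive, so `K(t, z) = O((1 + t²)⁻¹)` there; together with
`|a + b t + c t²| ≤ C (1 + t²)` this bounds every integrand by a multiple of `(1 + t²)⁻ᵏ⁻¹`.
-/

open MeasureTheory

noncomputable def nevanlinnaKernel (t : ℝ) (z : ℂ) : ℂ :=
  ((t : ℂ) - z)⁻¹ - (t : ℂ) / (1 + (t : ℂ) ^ 2)

theorem one_add_sq_ofReal_ne_zero (t : ℝ) : (1 : ℂ) + (t : ℂ) ^ 2 ≠ 0 := by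
  exact_mod_cast (by positivity : (0 : ℝ) < 1 + t ^ 2).ne'

theorem nevanlinnaKernel_eq_div {t : ℝ} {z : ℂ} (hz : (t : ℂ) - z ≠ 0) :
    nevanlinnaKernel t z = (1 + t * z) / ((1 + t ^ 2) * (t - z)) := by
  have := one_add_sq_ofReal_ne_zero t
  rw [nevanlinnaKernel]
  field_simp
  ring

theorem sub_mul_nevanlinnaKernel_mul_inv_one_add_sq_pow {t : ℝ} {z : ℂ} (lam : ℝ) (k : ℕ)
    (hz : (t : ℂ) - z ≠ 0) :
    (z - lam) * (nevanlinnaKernel t z * ((1 + (t : ℂ) ^ 2) ^ k)⁻¹)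
      = (1 + z ^ 2) * ((t - lam) • (nevanlinnaKernel t z * ((1 + (t : ℂ) ^ 2) ^ (k + 1))⁻¹))
        + ((-(1 + lam * t) * ((1 + t ^ 2) ^ (k + 2))⁻¹ : ℝ) : ℂ)
        + ((-lam * ((1 + t ^ 2) ^ (k + 1))⁻¹ : ℝ) : ℂ) * z
        + ((t * (t - lam) * ((1 + t ^ 2) ^ (k + 2))⁻¹ : ℝ) : ℂ) * z ^ 2 := by
  have := one_add_sq_ofReal_ne_zero t
  rw [nevanlinnaKernel_eq_div hz, Complex.real_smul]
  push_cast
  field_simp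
  ring

theorem exists_pos_le_norm_ofReal_sub {lam : ℝ} {z : ℂ} (hz : z.im ≠ 0 ∨ z.re < lam) :
    ∃ δ > 0, ∀ t : ℝ, lam ≤ t → δ ≤ ‖(t : ℂ) - z‖ := by
  rcases hz with him | hre
  · refine ⟨|z.im|, abs_pos.mpr him, fun t _ => ?_⟩
    simpa using Complex.abs_im_le_norm ((t : ℂ) - z)
  · refine ⟨lam - z.re, sub_pos.mpr hre, fun t ht => ?_⟩
    calc lam - z.re ≤ |((t : ℂ) - z).re| := by
          rw [Complex.sub_re, Complex.ofReal_re]; exact le_abs.mpr (.inl (by linarith))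
      _ ≤ ‖(t : ℂ) - z‖ := Complex.abs_re_le_norm _

theorem norm_nevanlinnaKernel_le {t δ : ℝ} {z : ℂ} (hδ : 0 < δ) (ht : δ ≤ ‖(t : ℂ) - z‖) :
    ‖nevanlinnaKernel t z‖ ≤ ((1 + ‖z‖ ^ 2) / δ + ‖z‖) * (1 + t ^ 2)⁻¹ := by
  set d := ‖(t : ℂ) - z‖
  have hd : 0 < d := hδ.trans_le ht
  have hnum : ‖1 + (t : ℂ) * z‖ ≤ (1 + ‖z‖ ^ 2) + ‖z‖ * d := by
    have htd : ‖(t : ℂ)‖ ≤ d + ‖z‖ := by simpa using norm_add_le ((t : ℂ) - z) z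
    calc ‖1 + (t : ℂ) * z‖ ≤ 1 + ‖(t : ℂ)‖ * ‖z‖ := by simpa using norm_add_le 1 ((t : ℂ) * z)
      _ ≤ 1 + (d + ‖z‖) * ‖z‖ := by gcongr
      _ = (1 + ‖z‖ ^ 2) + ‖z‖ * d := by ring
  have hden : ‖(1 + (t : ℂ) ^ 2) * (t - z)‖ = (1 + t ^ 2) * d := by
    rw [norm_mul]
    congr 1
    exact_mod_cast Complex.norm_of_nonneg (by positivity : (0 : ℝ) ≤ 1 + t ^ 2)
  rw [nevanlinnaKernel_eq_div (norm_pos_iff.mp hd), norm_div, hden, div_le_iff₀ (by positivity)]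
  calc ‖1 + (t : ℂ) * z‖ ≤ (1 + ‖z‖ ^ 2) + ‖z‖ * d := hnum
    _ = ((1 + ‖z‖ ^ 2) / d + ‖z‖) * (1 + t ^ 2)⁻¹ * ((1 + t ^ 2) * d) := by
        field_simp
    _ ≤ ((1 + ‖z‖ ^ 2) / δ + ‖z‖) * (1 + t ^ 2)⁻¹ * ((1 + t ^ 2) * d) := by gcongr

theorem abs_quadratic_le (a b c t : ℝ) :
    |a + b * t + c * t ^ 2| ≤ (|a| + |b| + |c|) * (1 + t ^ 2) := by
  have ht : |t| ≤ 1 + t ^ 2 := by nlinarith [sq_nonneg (|t| - 1), sq_abs t]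
  have h := abs_add_three a (b * t) (c * t ^ 2)
  rw [abs_mul, abs_mul, abs_of_nonneg (sq_nonneg t)] at h
  nlinarith [abs_nonneg a, abs_nonneg c, sq_nonneg t, mul_le_mul_of_nonneg_left ht (abs_nonneg b)]

theorem inv_one_add_sq_pow_succ (t : ℝ) (j : ℕ) :
    ((1 + t ^ 2) ^ (j + 1))⁻¹ = (1 + t ^ 2)⁻¹ * ((1 + t ^ 2) ^ j)⁻¹ := by
  rw [pow_succ', mul_inv]

section Integrability

variable {μ : Measure ℝ} {j : ℕ}

theorem integrable_quadratic_mul_inv_one_add_sq_pow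
    (hw : Integrable (fun t => ((1 + t ^ 2) ^ (j + 1))⁻¹) μ) (a b c : ℝ) :
    Integrable (fun t => (a + b * t + c * t ^ 2) * ((1 + t ^ 2) ^ (j + 2))⁻¹) μ := by
  refine (hw.const_mul (|a| + |b| + |c|)).mono' (by fun_prop) (.of_forall fun t => ?_)
  have hpos : (0 : ℝ) < 1 + t ^ 2 := by positivity
  rw [norm_mul, Real.norm_eq_abs, Real.norm_of_nonneg (by positivity),
    inv_one_add_sq_pow_succ t (j + 1), ← mul_assoc]
  gcongr
  rw [← div_eq_mul_inv, div_le_iff₀ hpos]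
  exact abs_quadratic_le a b c t

theorem integrable_nevanlinnaKernel_mul_inv_one_add_sq_pow {lam : ℝ} (hμ : ∀ᵐ t ∂μ, lam ≤ t)
    (hw : Integrable (fun t => ((1 + t ^ 2) ^ (j + 1))⁻¹) μ) {z : ℂ}
    (hz : z.im ≠ 0 ∨ z.re < lam) :
    Integrable (fun t => nevanlinnaKernel t z * ((1 + (t : ℂ) ^ 2) ^ j)⁻¹) μ := by
  obtain ⟨δ, hδ, hδz⟩ := exists_pos_le_norm_ofReal_sub hz
  refine (hw.const_mul ((1 + ‖z‖ ^ 2) / δ + ‖z‖)).mono' ?_ ?_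
  · unfold nevanlinnaKernel; fun_prop
  filter_upwards [hμ] with t ht
  have hcast : ((1 + (t : ℂ) ^ 2) ^ j)⁻¹ = ((((1 + t ^ 2) ^ j)⁻¹ : ℝ) : ℂ) := by push_cast; rfl
  rw [norm_mul, hcast, Complex.norm_real, Real.norm_of_nonneg (by positivity),
    inv_one_add_sq_pow_succ, ← mul_assoc]
  gcongr
  exact norm_nevanlinnaKernel_le hδ (hδz t ht)

end Integrability

section WithDensity

variable {α E : Type*} [MeasurableSpace α] {μ : Measure α}
  [NormedAddCommGroup E] [NormedSpace ℝ E] {f : α → ℝ}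

theorem integrable_withDensity_ofReal_iff (hf : Measurable f) (hf0 : 0 ≤ᵐ[μ] f) {g : α → E} :
    Integrable g (μ.withDensity fun x => ENNReal.ofReal (f x)) ↔
      Integrable (fun x => f x • g x) μ := by
  rw [integrable_withDensity_iff_integrable_smul' hf.ennreal_ofReal
    (.of_forall fun _ => ENNReal.ofReal_lt_top)]
  refine integrable_congr ?_
  filter_upwards [hf0] with x hx
  rw [ENNReal.toReal_ofReal hx]

theorem integral_withDensity_ofReal (hf : Measurable f) (hf0 : 0 ≤ᵐ[μ] f) (g : α → E) :
    ∫ x, g x ∂μ.withDensity (fun x => ENNReal.ofReal (f x)) = ∫ x, f x • g x ∂μ := by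
  rw [integral_withDensity_eq_integral_toReal_smul hf.ennreal_ofReal
    (.of_forall fun _ => ENNReal.ofReal_lt_top)]
  refine integral_congr_ae ?_
  filter_upwards [hf0] with x hx
  rw [ENNReal.toReal_ofReal hx]

end WithDensity

section Commutation

variable {μ : Measure ℝ} {lam : ℝ}

theorem integrable_inv_one_add_sq_pow_withDensity_sub (hμ : ∀ᵐ t ∂μ, lam ≤ t) {j : ℕ}
    (hw : Integrable (fun t => ((1 + t ^ 2) ^ (j + 1))⁻¹) μ) :
    Integrable (fun t => ((1 + t ^ 2) ^ (j + 2))⁻¹)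
      (μ.withDensity fun t => ENNReal.ofReal (t - lam)) := by
  rw [integrable_withDensity_ofReal_iff (by fun_prop) (hμ.mono fun t => sub_nonneg.mpr)]
  refine (integrable_quadratic_mul_inv_one_add_sq_pow hw (-lam) 1 0).congr (.of_forall fun t => ?_)
  simp only [smul_eq_mul]
  ring

theorem sub_mul_integral_nevanlinnaKernel_mul_inv_one_add_sq_pow (hμ : ∀ᵐ t ∂μ, lam ≤ t) {k : ℕ}
    (hw : Integrable (fun t => ((1 + t ^ 2) ^ (k + 1))⁻¹) μ) {z : ℂ}
    (hz : z.im ≠ 0 ∨ z.re < lam) :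
    (z - lam) * ∫ t, nevanlinnaKernel t z * ((1 + (t : ℂ) ^ 2) ^ k)⁻¹ ∂μ
      = (1 + z ^ 2) * ∫ t, nevanlinnaKernel t z * ((1 + (t : ℂ) ^ 2) ^ (k + 1))⁻¹
          ∂μ.withDensity (fun t => ENNReal.ofReal (t - lam))
        + ((∫ t, -(1 + lam * t) * ((1 + t ^ 2) ^ (k + 2))⁻¹ ∂μ : ℝ) : ℂ)
        + ((∫ t, -lam * ((1 + t ^ 2) ^ (k + 1))⁻¹ ∂μ : ℝ) : ℂ) * z
        + ((∫ t, t * (t - lam) * ((1 + t ^ 2) ^ (k + 2))⁻¹ ∂μ : ℝ) : ℂ) * z ^ 2 := by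
  have hdens : 0 ≤ᵐ[μ] fun t => t - lam := hμ.mono fun t => sub_nonneg.mpr
  have hG := (integrable_withDensity_ofReal_iff (by fun_prop) hdens).mp
    (integrable_nevanlinnaKernel_mul_inv_one_add_sq_pow
      ((withDensity_absolutelyContinuous _ _).ae_le hμ)
      (integrable_inv_one_add_sq_pow_withDensity_sub hμ hw) hz)
  rw [integral_withDensity_ofReal (by fun_prop) hdens]
  obtain ⟨δ, hδ, hδz⟩ := exists_pos_le_norm_ofReal_sub hz
  have hc₀ : Integrable (fun t => -(1 + lam * t) * ((1 + t ^ 2) ^ (k + 2))⁻¹) μ :=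
    (integrable_quadratic_mul_inv_one_add_sq_pow hw (-1) (-lam) 0).congr
      (.of_forall fun t => by ring)
  have hc₁ : Integrable (fun t => -lam * ((1 + t ^ 2) ^ (k + 1))⁻¹) μ := hw.const_mul _
  have hc₂ : Integrable (fun t => t * (t - lam) * ((1 + t ^ 2) ^ (k + 2))⁻¹) μ :=
    (integrable_quadratic_mul_inv_one_add_sq_pow hw 0 (-lam) 1).congr
      (.of_forall fun t => by ring)
  replace hc₀ : Integrable (fun t => ((-(1 + lam * t) * ((1 + t ^ 2) ^ (k + 2))⁻¹ : ℝ) : ℂ)) μ :=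
    hc₀.ofReal
  replace hc₁ : Integrable (fun t => ((-lam * ((1 + t ^ 2) ^ (k + 1))⁻¹ : ℝ) : ℂ)) μ := hc₁.ofReal
  replace hc₂ : Integrable (fun t => ((t * (t - lam) * ((1 + t ^ 2) ^ (k + 2))⁻¹ : ℝ) : ℂ)) μ :=
    hc₂.ofReal
  rw [← integral_const_mul, integral_congr_ae (hμ.mono fun t ht =>
      sub_mul_nevanlinnaKernel_mul_inv_one_add_sq_pow lam k
        (norm_pos_iff.mp (hδ.trans_le (hδz t ht)))),
    integral_add, integral_add, integral_add, integral_const_mul, integral_mul_const,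
    integral_mul_const,
    integral_complex_ofReal, integral_complex_ofReal, integral_complex_ofReal]
  all_goals fun_prop

end Commutation

/-- if `ρ` is a positive Borel measure supported in `[λ,∞)` with
`∫ (1+t²)^{-(k+1)} dρ < ∞` and `dρ̂ = (t-λ) dρ`, then
`∫ (1+t²)^{-(k+2)} dρ̂ < ∞` and there are reals `a₀, a₁, a₂` such that for all
`z ∉ [λ,∞)` (all integrals converging absolutely)
`(z-λ)∫((t-z)⁻¹ - t/(1+t²))(1+t²)^{-k} dρ
  = (1+z²)∫((t-z)⁻¹ - t/(1+t²))(1+t²)^{-(k+1)} dρ̂ + a₀ + a₁ z + a₂ z²`. -/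
theorem stmt_13 (lam : ℝ) (k : ℕ) (ρ : Measure ℝ)
    (hsupp : ρ (Set.Iio lam) = 0)
    (hfin : ∫⁻ t, ENNReal.ofReal (((1 + t ^ 2) ^ (k + 1))⁻¹) ∂ρ < ⊤)
    (ρhat : Measure ℝ)
    (hρhat : ρhat = ρ.withDensity (fun t => ENNReal.ofReal (t - lam))) :
    (∫⁻ t, ENNReal.ofReal (((1 + t ^ 2) ^ (k + 2))⁻¹) ∂ρhat < ⊤) ∧
    ∃ a₀ a₁ a₂ : ℝ, ∀ z : ℂ, (z.im ≠ 0 ∨ z.re < lam) →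
      Integrable (fun t : ℝ =>
        (((t : ℂ) - z)⁻¹ - (t : ℂ) / (1 + (t : ℂ) ^ 2)) *
          ((1 + (t : ℂ) ^ 2) ^ k)⁻¹) ρ ∧
      Integrable (fun t : ℝ =>
        (((t : ℂ) - z)⁻¹ - (t : ℂ) / (1 + (t : ℂ) ^ 2)) *
          ((1 + (t : ℂ) ^ 2) ^ (k + 1))⁻¹) ρhat ∧
      (z - lam) *
          ∫ t, (((t : ℂ) - z)⁻¹ - (t : ℂ) / (1 + (t : ℂ) ^ 2)) *
            ((1 + (t : ℂ) ^ 2) ^ k)⁻¹ ∂ρ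
        = (1 + z ^ 2) *
            (∫ t, (((t : ℂ) - z)⁻¹ - (t : ℂ) / (1 + (t : ℂ) ^ 2)) *
              ((1 + (t : ℂ) ^ 2) ^ (k + 1))⁻¹ ∂ρhat)
          + a₀ + a₁ * z + a₂ * z ^ 2 := by
  have hae : ∀ᵐ t ∂ρ, lam ≤ t := by
    simp only [ae_iff, not_le]
    exact hsupp
  have hw : Integrable (fun t => ((1 + t ^ 2) ^ (k + 1))⁻¹) ρ :=
    ⟨by fun_prop, (hasFiniteIntegral_iff_ofReal (.of_forall fun t => by positivity)).mpr hfin⟩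
  subst hρhat
  have hŵ := integrable_inv_one_add_sq_pow_withDensity_sub hae hw
  exact ⟨hŵ.lintegral_lt_top, _, _, _, fun z hz =>
    ⟨integrable_nevanlinnaKernel_mul_inv_one_add_sq_pow hae hw hz,
      integrable_nevanlinnaKernel_mul_inv_one_add_sq_pow
        ((withDensity_absolutelyContinuous _ _).ae_le hae) hŵ hz,
      sub_mul_integral_nevanlinnaKernel_mul_inv_one_add_sq_pow hae hw hz⟩⟩
end

section
/- Fix $p\in[1,\infty]$, $c>0$, a real $l\ge-\tfrac12$, and $\lambda\in\mathbb{R}$. Let $q:(0,c)\to\mathbb{R}$ be measurable with $x\mapsto x\,q(x)$ in $L^p(0,c)$. Suppose $u_1:(0,c)\to\mathbb{R}$ is twice differentiable, extends continuously to $[0,c]$ with $\inf_{[0,c]}u_1>0$, its derivative $u_1'$ belongs to $L^p(0,c)$, the function $x\mapsto x\,u_1'(x)$ extends continuously to $[0,c]$ with $\lim_{x\to0}x\,u_1'(x)=0$, the function $x\mapsto u_1'(x)+x\,u_1''(x)$ belongs to $L^p(0,c)$, and $\phi(x):=x^{l+1}u_1(x)$ satisfies $-\phi''(x)+\big(\tfrac{l(l+1)}{x^2}+q(x)\big)\phi(x)=\lambda\,\phi(x)$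 on $(0,c)$. Then the single commutation transform of the potential, $\tfrac{l(l+1)}{x^2}+q(x)-2\tfrac{d}{dx}\tfrac{\phi'(x)}{\phi(x)}$, equals $\tfrac{(l+1)(l+2)}{x^2}+\hat q(x)$ with $\hat q(x)=q(x)-2\tfrac{d}{dx}\tfrac{u_1'(x)}{u_1(x)}$, and $x\mapsto x\,\hat q(x)$ belongs to $L^p(0,c)$. -/
/-!
Since `φ = x^{l+1} u₁`, the logarithmic derivative splits as `φ'/φ = (l+1)/x + u₁'/u₁`, and
differentiating once more turns `l(l+1)/x² + 2(l+1)/x²` into `(l+1)(l+2)/x²`, leaving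
`q̂ = q - 2 (u₁'/u₁)'`. For the integrability, write
`x (u₁'/u₁)' = (x u₁'') / u₁ - (x u₁') u₁' / u₁²` with `x u₁'' = (u₁' + x u₁'') - u₁'`: each term
is an `Lᵖ` function times a function continuous on `[0, c]`, hence bounded there.
-/

open Set MeasureTheory Filter Topology

theorem hasDerivAt_logDeriv {u : ℝ → ℝ} {x : ℝ} (hux : u x ≠ 0) (hu : DifferentiableAt ℝ u x)
    (hu' : DifferentiableAt ℝ (deriv u) x) :
    HasDerivAt (logDeriv u) (deriv (deriv u) x / u x - logDeriv u x ^ 2) x :=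
  (hu'.hasDerivAt.div hu.hasDerivAt hux).congr_deriv (by rw [logDeriv_apply]; field_simp)

theorem Real.logDeriv_rpow_const {x : ℝ} (hx : 0 < x) (a : ℝ) :
    logDeriv (fun y : ℝ => y ^ a) x = a / x := by
  rw [logDeriv_apply, Real.deriv_rpow_const, Real.rpow_sub_one hx.ne']
  have := (Real.rpow_pos_of_pos hx a).ne'
  field_simp

theorem logDeriv_rpow_mul {u : ℝ → ℝ} {x : ℝ} (hx : 0 < x) (hux : u x ≠ 0)
    (hu : DifferentiableAt ℝ u x) (a : ℝ) :
    logDeriv (fun y => y ^ a * u y) x = a / x + logDeriv u x := by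
  rw [logDeriv_mul x (Real.rpow_pos_of_pos hx a).ne' hux
    (Real.differentiableAt_rpow_const_of_ne a hx.ne') hu, Real.logDeriv_rpow_const hx]

theorem hasDerivAt_logDeriv_rpow_mul {u : ℝ → ℝ} {x L : ℝ} (hx : 0 < x)
    (hu : ∀ᶠ y in 𝓝 x, u y ≠ 0 ∧ DifferentiableAt ℝ u y) (hL : HasDerivAt (logDeriv u) L x)
    (a : ℝ) : HasDerivAt (logDeriv fun y => y ^ a * u y) (-(a / x ^ 2) + L) x := by
  have hsplit : (fun y => a / y + logDeriv u y) =ᶠ[𝓝 x] logDeriv fun y => y ^ a * u y := by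
    filter_upwards [hu, Ioi_mem_nhds hx] with y ⟨hy, hdy⟩ hy0
    exact (logDeriv_rpow_mul hy0 hy hdy a).symm
  have hinv : HasDerivAt (fun y => a / y) (-(a / x ^ 2)) x := by
    simpa [div_eq_mul_inv, neg_div] using (hasDerivAt_inv hx.ne').const_mul a
  exact (hinv.add hL).congr_of_eventuallyEq hsplit.symm

theorem ContinuousOn.memLp_top_restrict {α E : Type*} [TopologicalSpace α] [MeasurableSpace α]
    [OpensMeasurableSpace α] [NormedAddCommGroup E] [SecondCountableTopologyEither α E]
    {μ : Measure α} {f : α → E} {K s : Set α} (hK : IsCompact K) (hf : ContinuousOn f K)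
    (hs : MeasurableSet s) (hsK : s ⊆ K) : MemLp f ⊤ (μ.restrict s) := by
  obtain ⟨C, hC⟩ := hK.exists_bound_of_continuousOn hf
  refine memLp_top_of_bound ((hf.mono hsK).aestronglyMeasurable hs) C ?_
  exact (ae_restrict_iff' hs).2 (ae_of_all _ fun x hx => hC x (hsK hx))

theorem memLp_mul_deriv_logDeriv {p : ENNReal} {μ : Measure ℝ} {a b : ℝ} {u g : ℝ → ℝ}
    (hu : ∀ x ∈ Ioo a b, DifferentiableAt ℝ u x)
    (hu' : ∀ x ∈ Ioo a b, DifferentiableAt ℝ (deriv u) x)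
    (hcont : ContinuousOn u (Icc a b)) (hne : ∀ x ∈ Icc a b, u x ≠ 0)
    (hg : ContinuousOn g (Icc a b)) (hgx : ∀ x ∈ Ioo a b, g x = x * deriv u x)
    (hd : MemLp (deriv u) p (μ.restrict (Ioo a b)))
    (hdd : MemLp (fun x => deriv u x + x * deriv (deriv u) x) p (μ.restrict (Ioo a b))) :
    MemLp (fun x => x * deriv (logDeriv u) x) p (μ.restrict (Ioo a b)) := by
  have hinv : MemLp (fun x => (u x)⁻¹) ⊤ (μ.restrict (Ioo a b)) :=
    (hcont.inv₀ hne).memLp_top_restrict isCompact_Icc measurableSet_Ioo Ioo_subset_Icc_self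
  have hgu : MemLp (fun x => g x / u x ^ 2) ⊤ (μ.restrict (Ioo a b)) :=
    (hg.div (hcont.pow 2) fun x hx => pow_ne_zero 2 (hne x hx)).memLp_top_restrict
      isCompact_Icc measurableSet_Ioo Ioo_subset_Icc_self
  refine (((hdd.sub hd).mul' hinv).sub (hd.mul' hgu)).ae_eq ?_
  filter_upwards [ae_restrict_mem measurableSet_Ioo] with x hx
  have hux := hne x (Ioo_subset_Icc_self hx)
  simp only [Pi.sub_apply]
  rw [(hasDerivAt_logDeriv hux (hu x hx) (hu' x hx)).deriv, hgx x hx, logDeriv_apply]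
  field_simp
  ring

theorem stmt_15_general (p : ENNReal) (c : ℝ)
    (l : ℝ)
    (q : ℝ → ℝ)
    (hq : MemLp (fun x => x * q x) p (volume.restrict (Set.Ioo 0 c)))
    (u1 : ℝ → ℝ)
    (hu1_d1 : ∀ x ∈ Set.Ioo (0 : ℝ) c, DifferentiableAt ℝ u1 x)
    (hu1_d2 : ∀ x ∈ Set.Ioo (0 : ℝ) c, DifferentiableAt ℝ (deriv u1) x)
    (hu1_cont : ContinuousOn u1 (Set.Icc 0 c))
    (hu1_pos : ∃ ε > 0, ∀ x ∈ Set.Icc (0 : ℝ) c, ε ≤ u1 x)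
    (hu1' : MemLp (deriv u1) p (volume.restrict (Set.Ioo 0 c)))
    (hxu1' : ∃ g : ℝ → ℝ, ContinuousOn g (Set.Icc 0 c) ∧ g 0 = 0 ∧
      ∀ x ∈ Set.Ioo (0 : ℝ) c, g x = x * deriv u1 x)
    (hu1'' : MemLp (fun x => deriv u1 x + x * deriv (deriv u1) x) p
      (volume.restrict (Set.Ioo 0 c)))
    (phi : ℝ → ℝ) (hphi : phi = fun x => x ^ (l + 1) * u1 x)
    (qhat : ℝ → ℝ)
    (hqhat : qhat = fun x => q x - 2 * deriv (fun y => deriv u1 y / u1 y) x) :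
    (∀ x ∈ Set.Ioo (0 : ℝ) c,
      l * (l + 1) / x ^ 2 + q x - 2 * deriv (fun y => deriv phi y / phi y) x
        = (l + 1) * (l + 2) / x ^ 2 + qhat x) ∧
    MemLp (fun x => x * qhat x) p (volume.restrict (Set.Ioo 0 c)) := by
  obtain ⟨ε, hε, hεu⟩ := hu1_pos
  obtain ⟨g, hg_cont, -, hg_eq⟩ := hxu1'
  have hne : ∀ x ∈ Icc 0 c, u1 x ≠ 0 := fun x hx => (hε.trans_le (hεu x hx)).ne'
  have hlog : ∀ x ∈ Ioo 0 c, HasDerivAt (logDeriv u1) _ x := fun x hx =>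
    hasDerivAt_logDeriv (hne x (Ioo_subset_Icc_self hx)) (hu1_d1 x hx) (hu1_d2 x hx)
  subst hphi hqhat
  refine ⟨fun x hx => ?_, ?_⟩
  · have hnhds : ∀ᶠ y in 𝓝 x, u1 y ≠ 0 ∧ DifferentiableAt ℝ u1 y :=
      eventually_of_mem (isOpen_Ioo.mem_nhds hx) fun y hy =>
        ⟨hne y (Ioo_subset_Icc_self hy), hu1_d1 y hy⟩
    change _ - 2 * deriv (logDeriv _) x = _ + (_ - 2 * deriv (logDeriv u1) x)
    rw [(hasDerivAt_logDeriv_rpow_mul hx.1 hnhds (hlog x hx) (l + 1)).deriv, (hlog x hx).deriv]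
    field_simp
    ring
  · convert hq.sub ((memLp_mul_deriv_logDeriv hu1_d1 hu1_d2 hu1_cont hne hg_cont hg_eq hu1'
      hu1'').const_mul 2) using 1
    ext x
    change x * (q x - 2 * deriv (logDeriv u1) x) = _
    simp only [Pi.sub_apply]
    ring

/-- for the perturbed Bessel operator with `x q ∈ L^p(0,c)` and
regular solution `φ(x) = x^{l+1} u₁(x)` at energy `λ` (where `u₁` and `x u₁'`
lie in `W^{1,p}(0,c)`, `u₁` is bounded below by a positive constant, and
`x u₁'(x) → 0` as `x → 0`), the single commutation transform of the potential
satisfies `l(l+1)/x² + q - 2(φ'/φ)' = (l+1)(l+2)/x² + q̂` with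
`q̂ = q - 2(u₁'/u₁)'` and `x q̂ ∈ L^p(0,c)`. -/
theorem stmt_15 (p : ENNReal) (hp : 1 ≤ p) (c : ℝ) (hc : 0 < c)
    (l : ℝ) (hl : -(1 / 2) ≤ l) (lam : ℝ)
    (q : ℝ → ℝ)
    (hq : MemLp (fun x => x * q x) p (volume.restrict (Set.Ioo 0 c)))
    (u1 : ℝ → ℝ)
    (hu1_d1 : ∀ x ∈ Set.Ioo (0 : ℝ) c, DifferentiableAt ℝ u1 x)
    (hu1_d2 : ∀ x ∈ Set.Ioo (0 : ℝ) c, DifferentiableAt ℝ (deriv u1) x)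
    (hu1_cont : ContinuousOn u1 (Set.Icc 0 c))
    (hu1_pos : ∃ ε > 0, ∀ x ∈ Set.Icc (0 : ℝ) c, ε ≤ u1 x)
    (hu1' : MemLp (deriv u1) p (volume.restrict (Set.Ioo 0 c)))
    (hxu1' : ∃ g : ℝ → ℝ, ContinuousOn g (Set.Icc 0 c) ∧ g 0 = 0 ∧
      ∀ x ∈ Set.Ioo (0 : ℝ) c, g x = x * deriv u1 x)
    (hu1'' : MemLp (fun x => deriv u1 x + x * deriv (deriv u1) x) p
      (volume.restrict (Set.Ioo 0 c)))
    (phi : ℝ → ℝ) (hphi : phi = fun x => x ^ (l + 1) * u1 x)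
    (hphi_eq : ∀ x ∈ Set.Ioo (0 : ℝ) c,
      -deriv (deriv phi) x + (l * (l + 1) / x ^ 2 + q x) * phi x = lam * phi x)
    (qhat : ℝ → ℝ)
    (hqhat : qhat = fun x => q x - 2 * deriv (fun y => deriv u1 y / u1 y) x) :
    (∀ x ∈ Set.Ioo (0 : ℝ) c,
      l * (l + 1) / x ^ 2 + q x - 2 * deriv (fun y => deriv phi y / phi y) x
        = (l + 1) * (l + 2) / x ^ 2 + qhat x) ∧
    MemLp (fun x => x * qhat x) p (volume.restrict (Set.Ioo 0 c)) :=
  stmt_15_general p c l q hq u1 hu1_d1 hu1_d2 hu1_cont hu1_pos hu1' hxu1' hu1'' phi hphi qhat hqhat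
end

section
/- Let $\mu\in\mathbb{C}\setminus\mathbb{R}$, $d\in\mathbb{R}$, and set $\omega=\mathrm{i}\sqrt{\mu}$ (principal branch, $\mathrm{Im}\sqrt{\mu}>0$), $c_1=1+\tfrac{d}{\omega}$, $c_2=1-\tfrac{d}{\omega}$, $c_3=\tfrac{c_1}{2\omega}$, $c_4=\tfrac{d}{2\omega^3}$, $c_5=-\tfrac{c_2}{2\omega}$. Define $\Lambda_2:[0,\infty)\to\mathbb{C}^2$ by $\Lambda_2(x)=\tfrac12\Big(\mathrm{e}^{-\omega x}\begin{pmatrix}c_3x+c_4\\ c_1\end{pmatrix}+\mathrm{e}^{\omega x}\begin{pmatrix}c_5x-c_4\\ c_2\end{pmatrix}\Big)$ and $S(x)=\int_0^x\Lambda_2(t)\Lambda_2(t)^*\,dt\in\mathbb{C}^{2\times2}$. Then $\det S(x)=\tfrac{x^6}{45}\,(1+O(x))$ as $x\downarrow0$; in particular $S(x)$ is positive definite for all sufficiently small $x>0$. -/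
/-!
Near `0` the components of `Λ₂` are `-t²/2 + O(t³)` and `1 + O(t)`: the constants `c₁, …, c₅`
cancel the lower Taylor coefficients of the two exponentials. Integrating the products gives
`S(x) = [[x⁵/20, -x³/6], [-x³/6, x]]` up to one order higher in each entry, hence
`det S(x) = x⁶/20 - x⁶/36 + O(x⁷) = x⁶/45 + O(x⁷)`. As a Gram matrix `S(x)` is positive
semidefinite, and a nonzero determinant makes it positive definite.
-/

open Set MeasureTheory Matrix Asymptotics Topology ComplexOrder

def HasLeadingTerm (l : Filter ℝ) (u : ℝ → ℂ) (a : ℂ) (m : ℕ) : Prop :=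
  (fun t => u t - a * (t : ℂ) ^ m) =O[l] (fun t => t ^ (m + 1))

lemma isBigO_mul_ofReal_pow (l : Filter ℝ) (a : ℂ) (m : ℕ) :
    (fun t : ℝ => a * (t : ℂ) ^ m) =O[l] (fun t => t ^ m) :=
  IsBigO.of_bound ‖a‖ (.of_forall fun t => by simp)

lemma integral_ofReal_pow (x : ℝ) (m : ℕ) :
    ∫ t in (0 : ℝ)..x, (t : ℂ) ^ m = (x : ℂ) ^ (m + 1) / (m + 1) := by
  simp_rw [← Complex.ofReal_pow]
  rw [intervalIntegral.integral_ofReal, integral_pow]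
  push_cast
  ring

namespace HasLeadingTerm

variable {l : Filter ℝ} {u v : ℝ → ℂ} {a b : ℂ} {m n : ℕ}

lemma mono {l' : Filter ℝ} (h : HasLeadingTerm l u a m) (hl : l' ≤ l) :
    HasLeadingTerm l' u a m :=
  IsBigO.mono h hl

lemma isBigO (h : HasLeadingTerm l u a m) (hl : l ≤ 𝓝 0) : u =O[l] (fun t => t ^ m) := by
  have hsucc : (fun t : ℝ => t ^ (m + 1)) =O[l] (fun t => t ^ m) :=
    ((isLittleO_pow_pow m.lt_succ_self).isBigO).mono hl
  simpa using (h.trans hsucc).add (isBigO_mul_ofReal_pow l a m)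

lemma sub (hu : HasLeadingTerm l u a m) (hv : HasLeadingTerm l v b m) :
    HasLeadingTerm l (fun t => u t - v t) (a - b) m :=
  (IsBigO.sub hu hv).congr_left fun t => by ring

lemma conj (h : HasLeadingTerm l u a m) :
    HasLeadingTerm l (fun t => starRingEnd ℂ (u t)) (starRingEnd ℂ a) m := by
  refine isBigO_norm_left.mp ((isBigO_norm_left.mpr h).congr_left fun t => ?_)
  rw [← RCLike.norm_conj]
  simp

lemma mul (hu : HasLeadingTerm l u a m) (hv : HasLeadingTerm l v b n) (hl : l ≤ 𝓝 0) :
    HasLeadingTerm l (fun t => u t * v t) (a * b) (m + n) := by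
  have hremu : (fun t => (u t - a * (t : ℂ) ^ m) * v t) =O[l] (fun t => t ^ (m + n + 1)) :=
    (IsBigO.mul hu (hv.isBigO hl)).congr_right fun t => by ring
  have hremv : (fun t => a * (t : ℂ) ^ m * (v t - b * (t : ℂ) ^ n)) =O[l]
      (fun t => t ^ (m + n + 1)) :=
    ((isBigO_mul_ofReal_pow l a m).mul hv).congr_right fun t => by ring
  exact (hremu.add hremv).congr_left fun t => by ring

lemma integral (h : HasLeadingTerm (𝓝[>] 0) u a m) (hu : Continuous u) :
    HasLeadingTerm (𝓝[>] 0) (fun x => ∫ t in Ioo 0 x, u t) (a / (m + 1)) (m + 1) := by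
  obtain ⟨C, hC, hCu⟩ := IsBigO.exists_nonneg h
  obtain ⟨ε, hε, hsub⟩ := mem_nhdsGT_iff_exists_Ioo_subset.mp (isBigOWith_iff.mp hCu)
  refine IsBigO.of_bound (C / (m + 2)) ?_
  filter_upwards [Ioo_mem_nhdsGT hε] with x ⟨hx0, hxε⟩
  have hlead : IntervalIntegrable (fun t : ℝ => a * (t : ℂ) ^ m) volume 0 x :=
    (by fun_prop : Continuous fun t : ℝ => a * (t : ℂ) ^ m).intervalIntegrable 0 x
  have hrem : (∫ t in Ioo 0 x, u t) - a / (m + 1) * (x : ℂ) ^ (m + 1)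
      = ∫ t in (0 : ℝ)..x, (u t - a * (t : ℂ) ^ m) := by
    rw [intervalIntegral.integral_sub (hu.intervalIntegrable 0 x) hlead,
      intervalIntegral.integral_const_mul, integral_ofReal_pow,
      intervalIntegral.integral_of_le hx0.le, integral_Ioc_eq_integral_Ioo]
    ring
  have hbound : ∀ t ∈ Ioc 0 x, ‖u t - a * (t : ℂ) ^ m‖ ≤ C * t ^ (m + 1) := fun t ht => by
    simpa [abs_of_pos ht.1] using hsub ⟨ht.1, ht.2.trans_lt hxε⟩
  calc ‖(∫ t in Ioo 0 x, u t) - a / (m + 1) * (x : ℂ) ^ (m + 1)‖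
      ≤ ∫ t in (0 : ℝ)..x, C * t ^ (m + 1) := by
        rw [hrem]
        exact intervalIntegral.norm_integral_le_of_norm_le hx0.le (.of_forall hbound)
          ((by fun_prop : Continuous fun t : ℝ => C * t ^ (m + 1)).intervalIntegrable 0 x)
    _ = C / (m + 2) * ‖x ^ (m + 1 + 1)‖ := by
        rw [intervalIntegral.integral_const_mul, integral_pow, norm_pow, Real.norm_of_nonneg hx0.le]
        push_cast
        ring

lemma eventually_ne_zero (h : HasLeadingTerm l u a m) (ha : a ≠ 0) (hl : l ≤ 𝓝[≠] 0) :
    ∀ᶠ t in l, u t ≠ 0 := by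
  have hsmall : (fun t => u t - a * (t : ℂ) ^ m) =o[l] (fun t => t ^ m) :=
    IsBigO.trans_isLittleO h ((isLittleO_pow_pow m.lt_succ_self).mono (hl.trans nhdsWithin_le_nhds))
  filter_upwards [hsmall.bound (half_pos (norm_pos_iff.mpr ha)), hl self_mem_nhdsWithin]
    with t ht ht0 hut
  have ht0' : 0 < ‖t‖ ^ m := pow_pos (norm_pos_iff.mpr ht0) m
  rw [hut, zero_sub, norm_neg, norm_mul, norm_pow, Complex.norm_real, norm_pow] at ht
  nlinarith [norm_pos_iff.mpr ha]

lemma integral_mul_conj (hu : HasLeadingTerm (𝓝 0) u a m) (hv : HasLeadingTerm (𝓝 0) v b n)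
    (hcu : Continuous u) (hcv : Continuous v) :
    HasLeadingTerm (𝓝[>] 0) (fun x => ∫ t in Ioo 0 x, u t * starRingEnd ℂ (v t))
      (a * starRingEnd ℂ b / ((m + n : ℕ) + 1)) (m + n + 1) :=
  ((hu.mul hv.conj le_rfl).mono nhdsWithin_le_nhds).integral (by fun_prop)

lemma det_integral_gram {L : ℝ → Fin 2 → ℂ} (hL : ∀ i, Continuous fun t => L t i)
    (h0 : HasLeadingTerm (𝓝 0) (fun t => L t 0) a m)
    (h1 : HasLeadingTerm (𝓝 0) (fun t => L t 1) b n) :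
    HasLeadingTerm (𝓝[>] 0)
      (fun x => (Matrix.of fun i j => ∫ t in Ioo 0 x, L t i * starRingEnd ℂ (L t j)).det)
      (a * starRingEnd ℂ a / (2 * m + 1) * (b * starRingEnd ℂ b / (2 * n + 1))
        - a * starRingEnd ℂ b / (m + n + 1) * (b * starRingEnd ℂ a / (m + n + 1)))
      (m + m + 1 + (n + n + 1)) := by
  have h00 := h0.integral_mul_conj h0 (hL 0) (hL 0)
  have h01 := h0.integral_mul_conj h1 (hL 0) (hL 1)
  have h10 := h1.integral_mul_conj h0 (hL 1) (hL 0)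
  have h11 := h1.integral_mul_conj h1 (hL 1) (hL 1)
  have hdiag := h00.mul h11 nhdsWithin_le_nhds
  have hoff := h01.mul h10 nhdsWithin_le_nhds
  rw [show m + n + 1 + (n + m + 1) = m + m + 1 + (n + n + 1) by ring] at hoff
  convert hdiag.sub hoff using 1
  · ext x
    rw [det_fin_two]
    rfl
  · push_cast
    ring

end HasLeadingTerm

lemma posSemidef_integral_mul_conj {ι α : Type*} [Fintype ι] [MeasurableSpace α] {μ : Measure α}
    (v : α → ι → ℂ) (hv : ∀ i j, Integrable (fun a => v a i * starRingEnd ℂ (v a j)) μ) :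
    (Matrix.of fun i j => ∫ a, v a i * starRingEnd ℂ (v a j) ∂μ).PosSemidef := by
  rw [posSemidef_iff_dotProduct_mulVec]
  refine ⟨?_, fun x => ?_⟩
  · ext i j
    simp only [conjTranspose_apply, of_apply, RCLike.star_def, ← integral_conj, map_mul,
      Complex.conj_conj, mul_comm]
  · have hquad : star x ⬝ᵥ ((Matrix.of fun i j => ∫ a, v a i * starRingEnd ℂ (v a j) ∂μ) *ᵥ x)
        = ∫ a, ((Complex.normSq (∑ i, star (x i) * v a i) : ℝ) : ℂ) ∂μ := by
      have hint : ∀ i j,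
          Integrable (fun a => star (x i) * (v a i * starRingEnd ℂ (v a j)) * x j) μ :=
        fun i j => ((hv i j).const_mul _).mul_const _
      calc _ = ∑ i, ∑ j, star (x i) * (∫ a, v a i * starRingEnd ℂ (v a j) ∂μ) * x j := by
            simp only [dotProduct, mulVec, of_apply, Pi.star_apply, Finset.mul_sum, mul_assoc]
        _ = ∫ a, ∑ i, ∑ j, star (x i) * (v a i * starRingEnd ℂ (v a j)) * x j ∂μ := by
            rw [integral_finsetSum _ fun i _ => integrable_finsetSum _ fun j _ => hint i j]
            refine Finset.sum_congr rfl fun i _ => ?_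
            rw [integral_finsetSum _ fun j _ => hint i j]
            simp only [integral_mul_const, integral_const_mul]
        _ = _ := by
            refine integral_congr_ae (.of_forall fun a => ?_)
            simp only [Complex.normSq_eq_conj_mul_self, map_sum, map_mul, Finset.sum_mul_sum]
            rw [Finset.sum_comm]
            refine Finset.sum_congr rfl fun j _ => Finset.sum_congr rfl fun i _ => ?_
            simp only [RCLike.star_def, Complex.conj_conj]
            ring
    rw [hquad, integral_complex_ofReal]
    exact Complex.zero_le_real.mpr (integral_nonneg fun a => Complex.normSq_nonneg _)

lemma isBigO_exp_mul_sub_sum_range (z : ℂ) (n : ℕ) :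
    (fun t : ℝ => Complex.exp (z * t) - ∑ i ∈ Finset.range n, (z * t) ^ i / i.factorial)
      =O[𝓝 0] (fun t => t ^ n) := by
  have hz : Filter.Tendsto (fun t : ℝ => z * t) (𝓝 0) (𝓝 0) := by
    simpa using ((by fun_prop : Continuous fun t : ℝ => z * t).tendsto 0)
  refine ((Complex.exp_sub_sum_range_isBigO_pow n).comp_tendsto hz).trans ?_
  exact IsBigO.of_bound (‖z‖ ^ n) (.of_forall fun t => by simp [mul_pow])

lemma hasLeadingTerm_first {ω : ℂ} (hω : ω ≠ 0) (d : ℂ) :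
    HasLeadingTerm (𝓝 0) (fun t : ℝ => 1 / 2 *
      (Complex.exp (-ω * t) * ((1 + d / ω) / (2 * ω) * t + d / (2 * ω ^ 3))
        + Complex.exp (ω * t) * (-((1 - d / ω) / (2 * ω)) * t - d / (2 * ω ^ 3)))) (-1 / 2) 2 := by
  have hR : ∀ z p q : ℂ, (fun t : ℝ => (Complex.exp (z * t)
      - ∑ i ∈ Finset.range 3, (z * t) ^ i / i.factorial) * (p * t + q)) =O[𝓝 0] (fun t => t ^ 3) :=
    fun z p q => ((isBigO_exp_mul_sub_sum_range z 3).mul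
      (((by fun_prop : Continuous fun t : ℝ => p * t + q).tendsto 0).isBigO_one ℝ)).congr_right
        fun t => mul_one _
  -- the function is `-t²/2 + d t³/4 + (R(-ωt)(c₃t + c₄) + R(ωt)(c₅t - c₄))/2`,
  -- `R` being the remainder of the quadratic Taylor polynomial of `exp`
  refine ((isBigO_mul_ofReal_pow _ (d / 4) 3).add
    (((hR (-ω) ((1 + d / ω) / (2 * ω)) (d / (2 * ω ^ 3))).add
      (hR ω (-((1 - d / ω) / (2 * ω))) (-(d / (2 * ω ^ 3))))).const_mul_left (1 / 2))).congr ?_ ?_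
  · intro t
    simp only [Finset.sum_range_succ, Finset.sum_range_zero]
    field_simp
    ring
  · intro t
    simp

lemma hasLeadingTerm_second (ω d : ℂ) :
    HasLeadingTerm (𝓝 0) (fun t : ℝ => 1 / 2 *
      (Complex.exp (-ω * t) * (1 + d / ω) + Complex.exp (ω * t) * (1 - d / ω))) 1 0 := by
  have hR := isBigO_exp_mul_sub_sum_range (n := 1)
  refine ((((hR (-ω)).const_mul_left (1 + d / ω)).add
    ((hR ω).const_mul_left (1 - d / ω))).const_mul_left (1 / 2)).congr (fun t => ?_) fun t => rfl
  simp only [Finset.sum_range_one]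
  ring

theorem stmt_16_general (d : ℝ)
    (sq : ℂ) (hsq_im : 0 < sq.im)
    (ω c1 c2 c3 c4 c5 : ℂ)
    (hω : ω = Complex.I * sq)
    (hc1 : c1 = 1 + (d : ℂ) / ω) (hc2 : c2 = 1 - (d : ℂ) / ω)
    (hc3 : c3 = c1 / (2 * ω)) (hc4 : c4 = (d : ℂ) / (2 * ω ^ 3))
    (hc5 : c5 = -(c2 / (2 * ω)))
    (L2 : ℝ → Fin 2 → ℂ)
    (hL2 : L2 = fun (x : ℝ) (i : Fin 2) =>
      (1 / 2 : ℂ) * (Complex.exp (-ω * (x : ℂ)) * ![c3 * (x : ℂ) + c4, c1] i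
        + Complex.exp (ω * (x : ℂ)) * ![c5 * (x : ℂ) - c4, c2] i))
    (S : ℝ → Matrix (Fin 2) (Fin 2) ℂ)
    (hS : S = fun x => Matrix.of fun i j =>
      ∫ t in Set.Ioo 0 x, L2 t i * (starRingEnd ℂ) (L2 t j)) :
    (fun x : ℝ => (S x).det - (x : ℂ) ^ 6 / 45)
      =O[𝓝[>] (0 : ℝ)] (fun x : ℝ => x ^ 7) ∧
    ∃ δ > 0, ∀ x ∈ Set.Ioo (0 : ℝ) δ, (S x).PosDef := by
  have hω0 : ω ≠ 0 := by
    rw [hω]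
    exact mul_ne_zero Complex.I_ne_zero fun h => by simp [h] at hsq_im
  subst hc3 hc4 hc5 hc1 hc2
  have h0 : HasLeadingTerm (𝓝 0) (fun t => L2 t 0) (-1 / 2) 2 := by
    simpa [hL2] using hasLeadingTerm_first hω0 d
  have h1 : HasLeadingTerm (𝓝 0) (fun t => L2 t 1) 1 0 := by
    simpa [hL2] using hasLeadingTerm_second ω d
  have hL : ∀ i, Continuous fun t => L2 t i := by
    subst hL2
    intro i
    fin_cases i <;> simp <;> fun_prop
  have hdet : HasLeadingTerm (𝓝[>] 0) (fun x => (S x).det) (1 / 45) 6 := by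
    convert HasLeadingTerm.det_integral_gram hL h0 h1 using 1
    · rw [hS]
    · norm_num [map_ofNat]
  refine ⟨hdet.congr_left fun x => by ring, ?_⟩
  obtain ⟨δ, hδ, hsub⟩ := mem_nhdsGT_iff_exists_Ioo_subset.mp
    (hdet.eventually_ne_zero (by norm_num) (nhdsGT_le_nhdsNE 0))
  refine ⟨δ, hδ, fun x hx => ?_⟩
  have hpsd : (S x).PosSemidef := by
    rw [hS]
    exact posSemidef_integral_mul_conj _ fun i j =>
      ((hL i).mul (Complex.continuous_conj.comp (hL j))).integrableOn_Icc.mono_set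
        Ioo_subset_Icc_self
  exact hpsd.posDef_iff_det_ne_zero.mpr (hsub hx)

/-- for the explicit GBDT data `Λ₂`, `S(x) = ∫_0^x Λ₂ Λ₂*`
generated by the Jordan block `A = [[μ,1],[0,μ]]` (with `μ ∉ ℝ`, `ω = i√μ`,
`Im √μ > 0`), one has `det S(x) = (x⁶/45)(1 + O(x))` as `x ↓ 0`; in
particular `S(x)` is positive definite for all sufficiently small `x > 0`. -/
theorem stmt_16 (μ : ℂ) (hμ : μ.im ≠ 0) (d : ℝ)
    (sq : ℂ) (hsq : sq ^ 2 = μ) (hsq_im : 0 < sq.im)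
    (ω c1 c2 c3 c4 c5 : ℂ)
    (hω : ω = Complex.I * sq)
    (hc1 : c1 = 1 + (d : ℂ) / ω) (hc2 : c2 = 1 - (d : ℂ) / ω)
    (hc3 : c3 = c1 / (2 * ω)) (hc4 : c4 = (d : ℂ) / (2 * ω ^ 3))
    (hc5 : c5 = -(c2 / (2 * ω)))
    (L2 : ℝ → Fin 2 → ℂ)
    (hL2 : L2 = fun (x : ℝ) (i : Fin 2) =>
      (1 / 2 : ℂ) * (Complex.exp (-ω * (x : ℂ)) * ![c3 * (x : ℂ) + c4, c1] i
        + Complex.exp (ω * (x : ℂ)) * ![c5 * (x : ℂ) - c4, c2] i))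
    (S : ℝ → Matrix (Fin 2) (Fin 2) ℂ)
    (hS : S = fun x => Matrix.of fun i j =>
      ∫ t in Set.Ioo 0 x, L2 t i * (starRingEnd ℂ) (L2 t j)) :
    (fun x : ℝ => (S x).det - (x : ℂ) ^ 6 / 45)
      =O[𝓝[>] (0 : ℝ)] (fun x : ℝ => x ^ 7) ∧
    ∃ δ > 0, ∀ x ∈ Set.Ioo (0 : ℝ) δ, (S x).PosDef :=
  stmt_16_general d sq hsq_im ω c1 c2 c3 c4 c5 hω hc1 hc2 hc3 hc4 hc5 L2 hL2 S hS
end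

section
/- Let $\mu\in\mathbb{C}\setminus\mathbb{R}$, $d\in\mathbb{R}$, $\omega=\mathrm{i}\sqrt{\mu}$ (principal branch), $c_1=1+\tfrac{d}{\omega}$, $c_2=1-\tfrac{d}{\omega}$, $c_3=\tfrac{c_1}{2\omega}$, $c_4=\tfrac{d}{2\omega^3}$, $c_5=-\tfrac{c_2}{2\omega}$, $\mathcal{A}=-\mathrm{i}\omega I_2+\tfrac{\mathrm{i}}{2\omega}\begin{pmatrix}0&1\\0&0\end{pmatrix}$, $A=\begin{pmatrix}\mu&1\\0&\mu\end{pmatrix}$, $J=\begin{pmatrix}0&1\\-1&0\end{pmatrix}$. Define $\Lambda_2(x)=\tfrac12\big(\mathrm{e}^{-\omega x}\begin{pmatrix}c_3x+c_4\\ c_1\end{pmatrix}+\mathrm{e}^{\omega x}\begin{pmatrix}c_5x-c_4\\ c_2\end{pmatrix}\big)$, $\Lambda_1(x)=\tfrac{\mathrm{i}}{2}\mathcal{A}\big(\mathrm{e}^{-\omega x}\begin{pmatrix}c_3x+c_4\\ c_1\end{pmatrix}-\mathrm{e}^{\omega x}\begin{pmatrix}c_5x-c_4\\ c_2\end{pmatrix}\big)$,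 $\Lambda(x)=[\Lambda_1(x)\ \Lambda_2(x)]\in\mathbb{C}^{2\times2}$, and $S(x)=\int_0^x\Lambda_2(t)\Lambda_2(t)^*dt$. Then for every $x>0$ the matrix $S(x)$ is positive definite, and for every $z\in\mathbb{C}\setminus\{\mu\}$ the transfer matrix $w_A(z,x)=I_2+J\Lambda(x)^*S(x)^{-1}(zI_2-A)^{-1}\Lambda(x)$ satisfies $\det w_A(z,x) = \dfrac{(z-\bar\mu)^2}{(z-\mu)^2}$; in particular $\det w_A(z,x)$ is independent of $x$. -/
open Set MeasureTheory Matrix Asymptotics Topology ComplexOrder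

open scoped ComplexConjugate

/-! Since `Λ₁' = A Λ₂` and `Λ₂' = -Λ₁`, the derivative of `Λ J Λ* = Λ₁ Λ₂* - Λ₂ Λ₁*` is
`A Λ₂ Λ₂* - Λ₂ Λ₂* A*`, the derivative of `A S - S A*`; as `Λ(0) J Λ(0)* = 0` for real `d`, this
gives `A S - S A* = Λ J Λ*`. Hence `S (z - A*) = (z - A) S + Λ J Λ*`, and Sylvester's identity
`det (1 + X Y) = det (1 + Y X)` turns `det w_A` into `det (z - A*) / det (z - A)`.

`S(x)` is positive definite: if `v* Λ₂` vanished on `(0, x)`, differentiating twice and letting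
`t → 0` would give `v* Λ₂(0) = v* A Λ₂(0) = 0`, while `Λ₂(0) = e₂` and `A Λ₂(0) = e₁ + μ e₂`
span `ℂ²`. -/

section IntegralGram

variable {n : Type*}

noncomputable def integralGram (Λ₂ : ℝ → n → ℂ) (x : ℝ) : Matrix n n ℂ :=
  Matrix.of fun i j => ∫ t in Ioo 0 x, Λ₂ t i * conj (Λ₂ t j)

theorem integralGram_isHermitian (Λ₂ : ℝ → n → ℂ) (x : ℝ) :
    (integralGram Λ₂ x).IsHermitian := by
  ext i j
  simp only [integralGram, conjTranspose_apply, of_apply, Complex.star_def, ← integral_conj,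
    map_mul, Complex.conj_conj, mul_comm]

theorem Continuous.integrableOn_Ioo {E : Type*} [NormedAddCommGroup E] {f : ℝ → E}
    (hf : Continuous f) (a b : ℝ) : IntegrableOn f (Ioo a b) :=
  hf.integrableOn_Icc.mono_set Ioo_subset_Icc_self

theorem star_dotProduct_integralGram_mulVec [Fintype n] {Λ₂ : ℝ → n → ℂ} (hΛ₂ : Continuous Λ₂)
    (x : ℝ) (v : n → ℂ) :
    star v ⬝ᵥ (integralGram Λ₂ x *ᵥ v) =
      ∫ t in Ioo 0 x, ((Complex.normSq (star v ⬝ᵥ Λ₂ t) : ℝ) : ℂ) := by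
  have hint : ∀ i j, IntegrableOn (fun t => Λ₂ t i * conj (Λ₂ t j)) (Ioo 0 x) := fun i j =>
    Continuous.integrableOn_Ioo (by fun_prop) 0 x
  calc star v ⬝ᵥ (integralGram Λ₂ x *ᵥ v)
      = ∑ i, ∑ j, star v i * v j * ∫ t in Ioo 0 x, Λ₂ t i * conj (Λ₂ t j) := by
        simp only [dotProduct, mulVec, integralGram, of_apply, Finset.mul_sum]
        exact Finset.sum_congr rfl fun i _ => Finset.sum_congr rfl fun j _ => by ring
    _ = ∫ t in Ioo 0 x, ∑ i, ∑ j, star v i * v j * (Λ₂ t i * conj (Λ₂ t j)) := by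
        rw [integral_finsetSum _ fun i _ =>
          integrable_finsetSum _ fun j _ => (hint i j).const_mul _]
        simp only [integral_finsetSum _ fun j _ => (hint _ j).const_mul _, integral_const_mul]
    _ = _ := by
        refine integral_congr_ae (Filter.Eventually.of_forall fun t => ?_)
        simp only [← Complex.mul_conj, dotProduct, map_sum, map_mul, Finset.sum_mul_sum,
          Pi.star_apply, Complex.star_def, Complex.conj_conj]
        exact Finset.sum_congr rfl fun i _ => Finset.sum_congr rfl fun j _ => by ring

theorem integralGram_posDef [Fintype n] {Λ₂ : ℝ → n → ℂ} (hΛ₂ : Continuous Λ₂) {x : ℝ}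
    (h : ∀ v ≠ 0, ∃ t ∈ Ioo 0 x, star v ⬝ᵥ Λ₂ t ≠ 0) : (integralGram Λ₂ x).PosDef := by
  refine .of_dotProduct_mulVec_pos (integralGram_isHermitian Λ₂ x) fun v hv => ?_
  obtain ⟨t₀, ht₀, hne⟩ := h v hv
  have hg : Continuous fun t => Complex.normSq (star v ⬝ᵥ Λ₂ t) := by fun_prop
  rw [star_dotProduct_integralGram_mulVec hΛ₂, integral_complex_ofReal, Complex.zero_lt_real,
    setIntegral_pos_iff_support_of_nonneg_ae
      (Filter.Eventually.of_forall fun t => Complex.normSq_nonneg _) (hg.integrableOn_Ioo 0 x)]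
  exact (hg.isOpen_support.inter isOpen_Ioo).measure_pos volume
    ⟨t₀, (Complex.normSq_pos.2 hne).ne', ht₀⟩

theorem HasDerivAt.star_dotProduct [Fintype n] {f : ℝ → n → ℂ} {f' : n → ℂ} {t : ℝ}
    (hf : HasDerivAt f f' t) (v : n → ℂ) :
    HasDerivAt (fun s => star v ⬝ᵥ f s) (star v ⬝ᵥ f') t := by
  simpa only [dotProduct] using
    HasDerivAt.fun_sum fun i _ => (hasDerivAt_pi.1 hf i).const_mul (star v i)

theorem eqOn_zero_of_hasDerivAt_of_eqOn_zero {f f' : ℝ → ℂ} {s : Set ℝ} (hs : IsOpen s)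
    (hf : ∀ t, HasDerivAt f (f' t) t) (h : EqOn f 0 s) : EqOn f' 0 s := fun t ht => by
  simpa [(hf t).deriv] using h.deriv hs ht

theorem eq_zero_of_eqOn_Ioo_zero {f : ℝ → ℂ} (hf : Continuous f) {x : ℝ} (hx : 0 < x)
    (h : EqOn f 0 (Ioo 0 x)) : f 0 = 0 :=
  h.closure hf continuous_const (by rw [closure_Ioo hx.ne]; exact left_mem_Icc.2 hx.le)

theorem star_dotProduct_eq_zero_of_eqOn_Ioo [Fintype n] {A : Matrix n n ℂ} {Λ₁ Λ₂ : ℝ → n → ℂ}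
    (hΛ₁ : ∀ t, HasDerivAt Λ₁ (A *ᵥ Λ₂ t) t) (hΛ₂ : ∀ t, HasDerivAt Λ₂ (-Λ₁ t) t)
    {x : ℝ} (hx : 0 < x) {v : n → ℂ} (hv : EqOn (fun t => star v ⬝ᵥ Λ₂ t) 0 (Ioo 0 x)) :
    star v ⬝ᵥ Λ₂ 0 = 0 ∧ star v ⬝ᵥ (A *ᵥ Λ₂ 0) = 0 := by
  have hcont : Continuous Λ₂ := continuous_iff_continuousAt.2 fun t => (hΛ₂ t).continuousAt
  have hΛ₁v : EqOn (fun t => -(star v ⬝ᵥ Λ₁ t)) 0 (Ioo 0 x) :=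
    eqOn_zero_of_hasDerivAt_of_eqOn_zero isOpen_Ioo
      (fun t => by simpa only [dotProduct_neg] using (hΛ₂ t).star_dotProduct v) hv
  have hAΛ₂v : EqOn (fun t => -(star v ⬝ᵥ (A *ᵥ Λ₂ t))) 0 (Ioo 0 x) :=
    eqOn_zero_of_hasDerivAt_of_eqOn_zero isOpen_Ioo (fun t => ((hΛ₁ t).star_dotProduct v).neg)
      hΛ₁v
  exact ⟨eq_zero_of_eqOn_Ioo_zero (by fun_prop) hx hv,
    neg_eq_zero.1 (eq_zero_of_eqOn_Ioo_zero (by fun_prop) hx hAΛ₂v)⟩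

theorem integralGram_posDef_of_hasDerivAt [Fintype n] {A : Matrix n n ℂ} {Λ₁ Λ₂ : ℝ → n → ℂ}
    (hΛ₁ : ∀ t, HasDerivAt Λ₁ (A *ᵥ Λ₂ t) t) (hΛ₂ : ∀ t, HasDerivAt Λ₂ (-Λ₁ t) t)
    {x : ℝ} (hx : 0 < x)
    (hspan : ∀ v, star v ⬝ᵥ Λ₂ 0 = 0 → star v ⬝ᵥ (A *ᵥ Λ₂ 0) = 0 → v = 0) :
    (integralGram Λ₂ x).PosDef := by
  refine integralGram_posDef (continuous_iff_continuousAt.2 fun t => (hΛ₂ t).continuousAt)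
    fun v hv => ?_
  by_contra! h
  obtain ⟨h₀, h₁⟩ := star_dotProduct_eq_zero_of_eqOn_Ioo hΛ₁ hΛ₂ hx h
  exact hv (hspan v h₀ h₁)

theorem integral_Ioo_eq_sub_of_hasDerivAt {E : Type*} [NormedAddCommGroup E]
    [NormedSpace ℝ E] [CompleteSpace E] {f f' : ℝ → E}
    (hf : ∀ t, HasDerivAt f (f' t) t) (hf' : Continuous f') {a b : ℝ} (hab : a ≤ b) :
    ∫ t in Ioo a b, f' t = f b - f a := by
  rw [← integral_Ioc_eq_integral_Ioo, ← intervalIntegral.integral_of_le hab,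
    intervalIntegral.integral_eq_sub_of_hasDerivAt (fun t _ => hf t)
      (hf'.intervalIntegrable a b)]

theorem mul_integralGram_sub_integralGram_mul_conjTranspose_apply [Fintype n]
    (A : Matrix n n ℂ) {Λ₂ : ℝ → n → ℂ} (hΛ₂ : Continuous Λ₂) (x : ℝ) (i k : n) :
    (A * integralGram Λ₂ x - integralGram Λ₂ x * Aᴴ) i k =
      ∫ t in Ioo 0 x, ((A *ᵥ Λ₂ t) i * conj (Λ₂ t k) - Λ₂ t i * conj ((A *ᵥ Λ₂ t) k)) := by
  have hint : ∀ i j, IntegrableOn (fun t => Λ₂ t i * conj (Λ₂ t j)) (Ioo 0 x) := fun i j =>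
    Continuous.integrableOn_Ioo (by fun_prop) 0 x
  have hsummand : ∀ j, IntegrableOn (fun t => A i j * (Λ₂ t j * conj (Λ₂ t k)) -
      conj (A k j) * (Λ₂ t i * conj (Λ₂ t j))) (Ioo 0 x) := fun j =>
    ((hint j k).const_mul _).sub ((hint i j).const_mul _)
  calc (A * integralGram Λ₂ x - integralGram Λ₂ x * Aᴴ) i k
      = ∑ j, ((A i j * ∫ t in Ioo 0 x, Λ₂ t j * conj (Λ₂ t k)) -
          conj (A k j) * ∫ t in Ioo 0 x, Λ₂ t i * conj (Λ₂ t j)) := by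
        simp only [Matrix.sub_apply, mul_apply, integralGram, of_apply, conjTranspose_apply,
          Complex.star_def, Finset.sum_sub_distrib]
        congr 1
        exact Finset.sum_congr rfl fun j _ => mul_comm _ _
    _ = ∑ j, ∫ t in Ioo 0 x, (A i j * (Λ₂ t j * conj (Λ₂ t k)) -
          conj (A k j) * (Λ₂ t i * conj (Λ₂ t j))) :=
        Finset.sum_congr rfl fun j _ => by
          rw [integral_sub ((hint j k).const_mul _) ((hint i j).const_mul _), integral_const_mul,
            integral_const_mul]
    _ = _ := by
        rw [← integral_finsetSum _ fun j _ => hsummand j]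
        refine integral_congr_ae (Filter.Eventually.of_forall fun t => ?_)
        simp only [mulVec, dotProduct, map_sum, map_mul, Finset.sum_mul, Finset.mul_sum,
          Finset.sum_sub_distrib]
        congr 1 <;> exact Finset.sum_congr rfl fun j _ => by ring

theorem mul_integralGram_sub_integralGram_mul_conjTranspose [Fintype n] {A : Matrix n n ℂ}
    {Λ₁ Λ₂ : ℝ → n → ℂ}
    (hΛ₁ : ∀ t, HasDerivAt Λ₁ (A *ᵥ Λ₂ t) t) (hΛ₂ : ∀ t, HasDerivAt Λ₂ (-Λ₁ t) t)
    {x : ℝ} (hx : 0 ≤ x) :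
    A * integralGram Λ₂ x - integralGram Λ₂ x * Aᴴ =
      (vecMulVec (Λ₁ x) (star (Λ₂ x)) - vecMulVec (Λ₂ x) (star (Λ₁ x))) -
        (vecMulVec (Λ₁ 0) (star (Λ₂ 0)) - vecMulVec (Λ₂ 0) (star (Λ₁ 0))) := by
  have hc₂ : Continuous Λ₂ := continuous_iff_continuousAt.2 fun t => (hΛ₂ t).continuousAt
  ext i k
  have hderiv : ∀ t, HasDerivAt (fun s => Λ₁ s i * conj (Λ₂ s k) - Λ₂ s i * conj (Λ₁ s k))
      ((A *ᵥ Λ₂ t) i * conj (Λ₂ t k) - Λ₂ t i * conj ((A *ᵥ Λ₂ t) k)) t := fun t => by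
    have h₁ := hasDerivAt_pi.1 (hΛ₁ t)
    have h₂ := hasDerivAt_pi.1 (hΛ₂ t)
    have h := ((h₁ i).fun_mul (h₂ k).star).fun_sub ((h₂ i).fun_mul (h₁ k).star)
    simp only [Complex.star_def] at h
    exact h.congr_deriv (by simp only [Pi.neg_apply, map_neg]; ring)
  rw [mul_integralGram_sub_integralGram_mul_conjTranspose_apply A hc₂,
    integral_Ioo_eq_sub_of_hasDerivAt hderiv (by fun_prop) hx]
  simp only [Matrix.sub_apply, vecMulVec_apply, Pi.star_apply, Complex.star_def]

end IntegralGram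

theorem of_vecCons_mul_mul_conjTranspose {n : Type*} [Fintype n] (a b : n → ℂ) :
    (of fun i => ![a i, b i]) * !![(0 : ℂ), 1; -1, 0] * (of fun i => ![a i, b i])ᴴ =
      vecMulVec a (star b) - vecMulVec b (star a) := by
  ext i k
  simp [mul_apply, Fin.sum_univ_two, vecMulVec_apply]
  ring

theorem det_one_add_mul_inv_mul_inv_mul {K : Type*} [Field K] {n m : Type*} [Fintype n]
    [DecidableEq n] [Fintype m] [DecidableEq m] {A B S : Matrix n n K} {Λ : Matrix n m K}
    {Γ : Matrix m n K} (hS : IsUnit S.det) {z : K} (hz : IsUnit (z • 1 - A).det)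
    (hABS : A * S - S * B = Λ * Γ) :
    (1 + Γ * S⁻¹ * (z • 1 - A)⁻¹ * Λ).det = (z • 1 - B).det / (z • 1 - A).det := by
  have key : 1 + Λ * (Γ * S⁻¹ * (z • 1 - A)⁻¹) = S * (z • 1 - B) * (S⁻¹ * (z • 1 - A)⁻¹) := by
    have hSB : S * (z • 1 - B) = (z • 1 - A) * S + Λ * Γ := by
      rw [← hABS, Matrix.mul_sub, Matrix.sub_mul, mul_smul_comm, smul_mul_assoc, Matrix.mul_one,
        Matrix.one_mul]
      abel
    rw [hSB, Matrix.add_mul, Matrix.mul_assoc (z • 1 - A), ← Matrix.mul_assoc S,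
      mul_nonsing_inv _ hS, Matrix.one_mul, mul_nonsing_inv _ hz]
    simp only [Matrix.mul_assoc]
  rw [det_one_add_mul_comm, key, det_mul, det_mul, det_mul, det_nonsing_inv,
    det_nonsing_inv, Ring.inverse_eq_inv, Ring.inverse_eq_inv, div_eq_mul_inv]
  field_simp [hS.ne_zero]

theorem conjTranspose_fin_two {R : Type*} [Star R] (a b c d : R) :
    !![a, b; c, d]ᴴ = !![star a, star c; star b, star d] := by
  ext i j
  fin_cases i <;> fin_cases j <;> rfl

theorem det_smul_one_sub_fin_two {R : Type*} [CommRing R] (z a b c d : R) :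
    (z • (1 : Matrix (Fin 2) (Fin 2) R) - !![a, b; c, d]).det = (z - a) * (z - d) - b * c := by
  simp [det_fin_two]

noncomputable def expPoly (ω p q r s : ℂ) (t : ℝ) : ℂ :=
  Complex.exp (-ω * t) * (p * t + q) + Complex.exp (ω * t) * (r * t + s)

theorem hasDerivAt_expPoly (ω p q r s : ℂ) (t : ℝ) :
    HasDerivAt (expPoly ω p q r s) (expPoly ω (-ω * p) (p - ω * q) (ω * r) (r + ω * s) t) t := by
  have hlin : ∀ a b : ℂ, HasDerivAt (fun u : ℝ => a * u + b) a t := fun a b => by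
    simpa using ((hasDerivAt_id (t : ℂ)).const_mul a).add_const b |>.comp_ofReal
  have hexp : ∀ a : ℂ, HasDerivAt (fun u : ℝ => Complex.exp (a * u)) (Complex.exp (a * t) * a) t :=
    fun a => by simpa using (((hasDerivAt_id (t : ℂ)).const_mul a).cexp).comp_ofReal
  refine (((hexp _).fun_mul (hlin p q)).fun_add ((hexp _).fun_mul (hlin r s))).congr_deriv ?_
  simp only [expPoly]
  ring

section FreeGBDT

/- The functions `Λ₂`, `Λ₁` of the statement, with `c₁, …, c₅` and `𝒜` expanded. -/
noncomputable def freeΛ₂ (ω d : ℂ) (t : ℝ) : Fin 2 → ℂ :=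
  ![expPoly ω ((ω + d) / (4 * ω ^ 2)) (d / (4 * ω ^ 3)) ((d - ω) / (4 * ω ^ 2))
      (-(d / (4 * ω ^ 3))) t,
    expPoly ω 0 ((ω + d) / (2 * ω)) 0 ((ω - d) / (2 * ω)) t]

noncomputable def freeΛ₁ (ω d : ℂ) (t : ℝ) : Fin 2 → ℂ :=
  ![expPoly ω ((ω + d) / (4 * ω)) (-(1 / (4 * ω))) ((ω - d) / (4 * ω)) (1 / (4 * ω)) t,
    expPoly ω 0 ((ω + d) / 2) 0 ((d - ω) / 2) t]

variable {ω : ℂ}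

theorem hasDerivAt_freeΛ₂ (hω : ω ≠ 0) (d : ℂ) (t : ℝ) :
    HasDerivAt (freeΛ₂ ω d) (-freeΛ₁ ω d t) t := by
  refine hasDerivAt_pi.2 fun i => ?_
  fin_cases i <;>
  · refine (hasDerivAt_expPoly ..).congr_deriv ?_
    simp [freeΛ₁, expPoly]
    field_simp
    ring

theorem hasDerivAt_freeΛ₁ (hω : ω ≠ 0) {μ : ℂ} (hωμ : ω ^ 2 = -μ) (d : ℂ) (t : ℝ) :
    HasDerivAt (freeΛ₁ ω d) (!![μ, 1; 0, μ] *ᵥ freeΛ₂ ω d t) t := by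
  obtain rfl : μ = -ω ^ 2 := by rw [hωμ, neg_neg]
  refine hasDerivAt_pi.2 fun i => ?_
  fin_cases i <;>
  · refine (hasDerivAt_expPoly ..).congr_deriv ?_
    simp [freeΛ₂, expPoly, mulVec, dotProduct, Fin.sum_univ_two]
    field_simp
    ring

theorem freeΛ₂_zero (hω : ω ≠ 0) (d : ℂ) : freeΛ₂ ω d 0 = ![0, 1] := by
  ext i
  fin_cases i <;> simp [freeΛ₂, expPoly]
  field_simp
  ring

theorem freeΛ₁_zero (d : ℂ) : freeΛ₁ ω d 0 = ![0, d] := by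
  ext i
  fin_cases i <;> simp [freeΛ₁, expPoly]
  ring

theorem integralGram_freeΛ₂_posDef (hω : ω ≠ 0) {μ : ℂ} (hωμ : ω ^ 2 = -μ) (d : ℂ) {x : ℝ}
    (hx : 0 < x) : (integralGram (freeΛ₂ ω d) x).PosDef := by
  refine integralGram_posDef_of_hasDerivAt (hasDerivAt_freeΛ₁ hω hωμ d) (hasDerivAt_freeΛ₂ hω d)
    hx fun v h₀ h₁ => ?_
  simp [freeΛ₂_zero hω, dotProduct, Fin.sum_univ_two, mulVec] at h₀ h₁
  ext i
  fin_cases i <;> simp_all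

theorem jordan_mul_integralGram_freeΛ₂_sub (hω : ω ≠ 0) {μ : ℂ} (hωμ : ω ^ 2 = -μ) (d : ℝ)
    {x : ℝ} (hx : 0 ≤ x) :
    !![μ, 1; 0, μ] * integralGram (freeΛ₂ ω d) x - integralGram (freeΛ₂ ω d) x * !![μ, 1; 0, μ]ᴴ =
      (of fun i => ![freeΛ₁ ω d x i, freeΛ₂ ω d x i]) *
        (!![0, 1; -1, 0] * (of fun i => ![freeΛ₁ ω d x i, freeΛ₂ ω d x i])ᴴ) := by
  have hboundary : vecMulVec ![0, (d : ℂ)] (star ![0, 1]) - vecMulVec ![0, 1] (star ![0, (d : ℂ)])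
      = 0 := by
    ext i j
    rw [Matrix.sub_apply, vecMulVec_apply, vecMulVec_apply]
    fin_cases i <;> fin_cases j <;> simp
  rw [mul_integralGram_sub_integralGram_mul_conjTranspose (hasDerivAt_freeΛ₁ hω hωμ d)
    (hasDerivAt_freeΛ₂ hω d) hx, freeΛ₁_zero, freeΛ₂_zero hω, hboundary, sub_zero,
    ← of_vecCons_mul_mul_conjTranspose, Matrix.mul_assoc]

end FreeGBDT

theorem stmt_18_general (μ : ℂ) (d : ℝ)
    (sq : ℂ) (hsq : sq ^ 2 = μ) (hsq_im : 0 < sq.im)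
    (ω c1 c2 c3 c4 c5 : ℂ)
    (hω : ω = Complex.I * sq)
    (hc1 : c1 = 1 + (d : ℂ) / ω) (hc2 : c2 = 1 - (d : ℂ) / ω)
    (hc3 : c3 = c1 / (2 * ω)) (hc4 : c4 = (d : ℂ) / (2 * ω ^ 3))
    (hc5 : c5 = -(c2 / (2 * ω)))
    (𝒜 A J : Matrix (Fin 2) (Fin 2) ℂ)
    (h𝒜 : 𝒜 = (-(Complex.I * ω)) • (1 : Matrix (Fin 2) (Fin 2) ℂ)
      + (Complex.I / (2 * ω)) • !![0, 1; 0, 0])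
    (hA : A = !![μ, 1; 0, μ])
    (hJ : J = !![0, 1; -1, 0])
    (L2 : ℝ → Fin 2 → ℂ)
    (hL2 : L2 = fun (x : ℝ) (i : Fin 2) =>
      (1 / 2 : ℂ) * (Complex.exp (-ω * (x : ℂ)) * ![c3 * (x : ℂ) + c4, c1] i
        + Complex.exp (ω * (x : ℂ)) * ![c5 * (x : ℂ) - c4, c2] i))
    (L1 : ℝ → Fin 2 → ℂ)
    (hL1 : L1 = fun (x : ℝ) =>
      (Complex.I / 2) • 𝒜.mulVec (fun i : Fin 2 =>
        Complex.exp (-ω * (x : ℂ)) * ![c3 * (x : ℂ) + c4, c1] i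
          - Complex.exp (ω * (x : ℂ)) * ![c5 * (x : ℂ) - c4, c2] i))
    (L : ℝ → Matrix (Fin 2) (Fin 2) ℂ)
    (hL : L = fun x => Matrix.of fun i => ![L1 x i, L2 x i])
    (S : ℝ → Matrix (Fin 2) (Fin 2) ℂ)
    (hS : S = fun x => Matrix.of fun i j =>
      ∫ t in Set.Ioo 0 x, L2 t i * (starRingEnd ℂ) (L2 t j))
    (w : ℂ → ℝ → Matrix (Fin 2) (Fin 2) ℂ)
    (hw : w = fun z x =>
      1 + J * (L x)ᴴ * (S x)⁻¹ *
        (z • (1 : Matrix (Fin 2) (Fin 2) ℂ) - A)⁻¹ * L x) :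
    (∀ x : ℝ, 0 < x → (S x).PosDef) ∧
    ∀ x : ℝ, 0 < x → ∀ z : ℂ, z ≠ μ →
      (w z x).det = (z - (starRingEnd ℂ) μ) ^ 2 / (z - μ) ^ 2 := by
  have hω0 : ω ≠ 0 := hω ▸ mul_ne_zero Complex.I_ne_zero fun h => by simp [h] at hsq_im
  have hωμ : ω ^ 2 = -μ := by rw [hω, mul_pow, Complex.I_sq, hsq]; ring
  have hL2' : L2 = freeΛ₂ ω d := by
    subst hL2 hc1 hc2 hc3 hc4 hc5
    funext t i
    fin_cases i
    · simp [freeΛ₂, expPoly]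
      field_simp
      ring
    · simp [freeΛ₂, expPoly]
      field_simp
  have hL1' : L1 = freeΛ₁ ω d := by
    subst hL1 h𝒜 hc1 hc2 hc3 hc4 hc5
    funext t i
    fin_cases i <;>
    · simp [freeΛ₁, expPoly]
      field_simp
      rw [Complex.I_sq]
      ring
  obtain rfl : S = integralGram L2 := hS
  subst hL2' hL1' hA hJ hL hw
  refine ⟨fun x hx => integralGram_freeΛ₂_posDef hω0 hωμ d hx, fun x hx z hz => ?_⟩
  have hdet : IsUnit (z • (1 : Matrix (Fin 2) (Fin 2) ℂ) - !![μ, 1; 0, μ]).det := by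
    simpa [det_smul_one_sub_fin_two, sub_eq_zero] using hz
  beta_reduce
  rw [det_one_add_mul_inv_mul_inv_mul (integralGram_freeΛ₂_posDef hω0 hωμ d hx).det_pos.ne'.isUnit
    hdet (jordan_mul_integralGram_freeΛ₂_sub hω0 hωμ d hx.le), conjTranspose_fin_two,
    det_smul_one_sub_fin_two, det_smul_one_sub_fin_two]
  simp only [star_one, star_zero, Complex.star_def]
  ring

/-- for the explicit GBDT data `Λ = [Λ₁ Λ₂]`,
`S(x) = ∫_0^x Λ₂ Λ₂*` generated by the Jordan block `A = [[μ,1],[0,μ]]`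
(`μ ∉ ℝ`, `ω = i√μ`, `Im √μ > 0`, square root `𝒜` of `A`), the matrix `S(x)`
is positive definite for every `x > 0` and the transfer matrix
`w_A(z,x) = I₂ + J Λ(x)* S(x)⁻¹ (zI₂ - A)⁻¹ Λ(x)` satisfies
`det w_A(z,x) = (z - μ̄)²/(z - μ)²` for every `z ≠ μ`; in particular the
determinant is independent of `x`. -/
theorem stmt_18 (μ : ℂ) (hμ : μ.im ≠ 0) (d : ℝ)
    (sq : ℂ) (hsq : sq ^ 2 = μ) (hsq_im : 0 < sq.im)
    (ω c1 c2 c3 c4 c5 : ℂ)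
    (hω : ω = Complex.I * sq)
    (hc1 : c1 = 1 + (d : ℂ) / ω) (hc2 : c2 = 1 - (d : ℂ) / ω)
    (hc3 : c3 = c1 / (2 * ω)) (hc4 : c4 = (d : ℂ) / (2 * ω ^ 3))
    (hc5 : c5 = -(c2 / (2 * ω)))
    (𝒜 A J : Matrix (Fin 2) (Fin 2) ℂ)
    (h𝒜 : 𝒜 = (-(Complex.I * ω)) • (1 : Matrix (Fin 2) (Fin 2) ℂ)
      + (Complex.I / (2 * ω)) • !![0, 1; 0, 0])
    (hA : A = !![μ, 1; 0, μ])
    (hJ : J = !![0, 1; -1, 0])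
    (L2 : ℝ → Fin 2 → ℂ)
    (hL2 : L2 = fun (x : ℝ) (i : Fin 2) =>
      (1 / 2 : ℂ) * (Complex.exp (-ω * (x : ℂ)) * ![c3 * (x : ℂ) + c4, c1] i
        + Complex.exp (ω * (x : ℂ)) * ![c5 * (x : ℂ) - c4, c2] i))
    (L1 : ℝ → Fin 2 → ℂ)
    (hL1 : L1 = fun (x : ℝ) =>
      (Complex.I / 2) • 𝒜.mulVec (fun i : Fin 2 =>
        Complex.exp (-ω * (x : ℂ)) * ![c3 * (x : ℂ) + c4, c1] i
          - Complex.exp (ω * (x : ℂ)) * ![c5 * (x : ℂ) - c4, c2] i))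
    (L : ℝ → Matrix (Fin 2) (Fin 2) ℂ)
    (hL : L = fun x => Matrix.of fun i => ![L1 x i, L2 x i])
    (S : ℝ → Matrix (Fin 2) (Fin 2) ℂ)
    (hS : S = fun x => Matrix.of fun i j =>
      ∫ t in Set.Ioo 0 x, L2 t i * (starRingEnd ℂ) (L2 t j))
    (w : ℂ → ℝ → Matrix (Fin 2) (Fin 2) ℂ)
    (hw : w = fun z x =>
      1 + J * (L x)ᴴ * (S x)⁻¹ *
        (z • (1 : Matrix (Fin 2) (Fin 2) ℂ) - A)⁻¹ * L x) :
    (∀ x : ℝ, 0 < x → (S x).PosDef) ∧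
    ∀ x : ℝ, 0 < x → ∀ z : ℂ, z ≠ μ →
      (w z x).det = (z - (starRingEnd ℂ) μ) ^ 2 / (z - μ) ^ 2 :=
  stmt_18_general μ d sq hsq hsq_im ω c1 c2 c3 c4 c5 hω hc1 hc2 hc3 hc4 hc5 𝒜 A J h𝒜 hA hJ L2 hL2 L1
    hL1 L hL S hS w hw
end
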